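/- arXiv:2512.15341 — 18 statements merged into one kernel-verified Lean document; each statement's English description precedes it below -/
import Mathlib

section
/- Let X be a nonempty finite set and u, v : X → ℝ. If there exists a concave and strictly increasing function φ defined on the convex hull of u(X) such that v(x) = φ(u(x)) for every x ∈ X, then v is more risk-averse than u: for every x ∈ X and every probability distribution p on X, ∑_y v(y)·p(y) ≥ v(x) implies ∑_y u(y)·p(y) ≥ u(x), and ∑_y v(y)·p(y) > v(x) implies ∑_y u(y)·p(y) > u(x). -/
open Finset

def IsDist {X : Type} [Fintype X] (p : X → ℝ) : Prop :=
  (∀ x, 0 ≤ p x) ∧ (∑ x, p x) = 1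

def NSD {X S : Type} [Fintype X] (S' : Set S) (U : X → S → ℝ) : Set X :=
  {x | ¬ ∃ p : X → ℝ, IsDist p ∧ ∀ s ∈ S', (∑ y, U y s * p y) > U x s}

def NWD {X S : Type} [Fintype X] (S' : Set S) (U : X → S → ℝ) : Set X :=
  {x | ¬ ∃ p : X → ℝ, IsDist p ∧ (∀ s ∈ S', (∑ y, U y s * p y) ≥ U x s) ∧
      (∃ s ∈ S', (∑ y, U y s * p y) > U x s)}

def NSDhat {X S : Type} (S' : Set S) (U : X → S → ℝ) : Set X :=
  {x | ¬ ∃ y : X, ∀ s ∈ S', U y s > U x s}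

def NWDhat {X S : Type} (S' : Set S) (U : X → S → ℝ) : Set X :=
  {x | ¬ ∃ y : X, (∀ s ∈ S', U y s ≥ U x s) ∧ (∃ s ∈ S', U y s > U x s)}

theorem stmt0 {X : Type} [Fintype X] [Nonempty X] (u v : X → ℝ)
    (φ : ℝ → ℝ)
    (hconc : ConcaveOn ℝ (convexHull ℝ (Set.range u)) φ)
    (hmono : StrictMonoOn φ (convexHull ℝ (Set.range u)))
    (hv : ∀ x, v x = φ (u x)) :
    ∀ (x : X) (p : X → ℝ), IsDist p →
      (((∑ y, v y * p y) ≥ v x → (∑ y, u y * p y) ≥ u x) ∧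
       ((∑ y, v y * p y) > v x → (∑ y, u y * p y) > u x)) := by
  intro x p hp
  obtain ⟨hp0, hp1⟩ := hp
  have hmem : ∀ y : X, u y ∈ convexHull ℝ (Set.range u) := fun y =>
    subset_convexHull ℝ _ ⟨y, rfl⟩
  have hsum_mem : (∑ y, p y • u y) ∈ convexHull ℝ (Set.range u) :=
    (convex_convexHull ℝ _).sum_mem (fun y _ => hp0 y) hp1 (fun y _ => hmem y)
  have hjensen : ∑ y, p y • φ (u y) ≤ φ (∑ y, p y • u y) :=
    hconc.le_map_sum (fun y _ => hp0 y) hp1 (fun y _ => hmem y)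
  have hvsum : (∑ y, v y * p y) = ∑ y, p y • φ (u y) := by
    simp [hv, mul_comm, smul_eq_mul]
  have husum : (∑ y, u y * p y) = ∑ y, p y • u y := by
    simp [mul_comm, smul_eq_mul]
  rw [hvsum, husum, hv x]
  constructor
  · intro h
    by_contra hlt
    push_neg at hlt
    have := hmono hsum_mem (hmem x) hlt
    linarith
  · intro h
    by_contra hle
    push_neg at hle
    have := hmono.monotoneOn hsum_mem (hmem x) hle
    linarith
end

section
/- Let X be a nonempty finite set and u, v : X → ℝ with v more risk-averse than u. Then: (i) for any x, y ∈ X, u(x) ≥ u(y) implies v(x) ≥ v(y), and u(x) > u(y) implies v(x) > v(y); and (ii) for any x, y, z ∈ X with u(x) < u(y) < u(z), one has (u(z)−u(y))/(u(y)−u(x)) ≥ (v(z)−v(y))/(v(y)−v(x)). -/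
open Finset

/-!
Testing the risk-aversion hypothesis on a degenerate lottery `δ_y` at `x` compares `x` with `y`
directly, which gives the ordinal part (i). For (ii), the lottery that yields `z` with probability
`t = (v y - v x) / (v z - v x)` and `x` otherwise is, for `v`, exactly as good as `y`; hence it is
at least as good as `y` for `u`, and clearing denominators in `t * u z + (1 - t) * u x ≥ u y` is
the claimed inequality between the ratios of utility increments.
-/

section RiskAversion

variable {X : Type} [Fintype X]

theorem IsDist.single [DecidableEq X] (x : X) : IsDist (Pi.single x 1 : X → ℝ) :=
  ⟨fun y => by by_cases h : y = x <;> simp [h], by simp⟩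

theorem IsDist.convexComb {p q : X → ℝ} (hp : IsDist p) (hq : IsDist q) {t : ℝ}
    (ht₀ : 0 ≤ t) (ht₁ : t ≤ 1) : IsDist (t • p + (1 - t) • q) := by
  refine ⟨fun y => ?_, ?_⟩
  · have := hp.1 y
    have := hq.1 y
    simp only [Pi.add_apply, Pi.smul_apply, smul_eq_mul]
    nlinarith
  · simp only [Pi.add_apply, Pi.smul_apply, smul_eq_mul, sum_add_distrib, ← mul_sum, hp.2, hq.2]
    ring

theorem sum_mul_single [DecidableEq X] (f : X → ℝ) (x : X) :
    ∑ y, f y * (Pi.single x 1 : X → ℝ) y = f x := by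
  simp [Pi.single_apply]

theorem sum_mul_convexComb (f p q : X → ℝ) (t : ℝ) :
    ∑ y, f y * (t • p + (1 - t) • q) y =
      t * ∑ y, f y * p y + (1 - t) * ∑ y, f y * q y := by
  simp only [Pi.add_apply, Pi.smul_apply, smul_eq_mul, mul_sum, ← sum_add_distrib]
  exact sum_congr rfl fun _ _ => by ring

def MoreRiskAverse (v u : X → ℝ) : Prop :=
  ∀ (x : X) (p : X → ℝ), IsDist p →
    (((∑ y, v y * p y) ≥ v x → (∑ y, u y * p y) ≥ u x) ∧
     ((∑ y, v y * p y) > v x → (∑ y, u y * p y) > u x))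

namespace MoreRiskAverse

variable {u v : X → ℝ}

theorem le_of_le (h : MoreRiskAverse v u) {x y : X} (hv : v x ≤ v y) : u x ≤ u y := by
  classical
  simpa only [sum_mul_single] using (h x _ (IsDist.single y)).1 (by rwa [sum_mul_single])

theorem lt_of_lt (h : MoreRiskAverse v u) {x y : X} (hv : v x < v y) : u x < u y := by
  classical
  simpa only [sum_mul_single] using (h x _ (IsDist.single y)).2 (by rwa [sum_mul_single])

theorem le_convexComb (h : MoreRiskAverse v u) {x y z : X} {t : ℝ} (ht₀ : 0 ≤ t) (ht₁ : t ≤ 1)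
    (hv : v y ≤ t * v z + (1 - t) * v x) : u y ≤ t * u z + (1 - t) * u x := by
  classical
  have hp := (IsDist.single z).convexComb (IsDist.single x) ht₀ ht₁
  simpa only [sum_mul_convexComb, sum_mul_single] using
    (h y _ hp).1 (by simpa only [sum_mul_convexComb, sum_mul_single] using hv)

theorem div_le_div (h : MoreRiskAverse v u) {x y z : X} (hxy : u x < u y) (hyz : u y < u z) :
    (v z - v y) / (v y - v x) ≤ (u z - u y) / (u y - u x) := by
  have hvxy : v x < v y := by_contra fun hv => hxy.not_ge (h.le_of_le (not_lt.1 hv))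
  have hvyz : v y < v z := by_contra fun hv => hyz.not_ge (h.le_of_le (not_lt.1 hv))
  have hvxz : 0 < v z - v x := by linarith
  have hv : v y = (v y - v x) / (v z - v x) * v z + (1 - (v y - v x) / (v z - v x)) * v x := by
    field_simp; ring
  have hu := h.le_convexComb (div_nonneg (by linarith) hvxz.le)
    ((div_le_one hvxz).2 (by linarith)) hv.le
  rw [div_le_div_iff₀ (by linarith) (by linarith)]
  field_simp at hu
  linear_combination hu

end MoreRiskAverse

end RiskAversion

theorem stmt1_general {X : Type} [Fintype X] (u v : X → ℝ)
    (hra : ∀ (x : X) (p : X → ℝ), IsDist p →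
      (((∑ y, v y * p y) ≥ v x → (∑ y, u y * p y) ≥ u x) ∧
       ((∑ y, v y * p y) > v x → (∑ y, u y * p y) > u x))) :
    (∀ x y : X, (u x ≥ u y → v x ≥ v y) ∧ (u x > u y → v x > v y)) ∧
    (∀ x y z : X, u x < u y → u y < u z →
      (u z - u y) / (u y - u x) ≥ (v z - v y) / (v y - v x)) := by
  have h : MoreRiskAverse v u := hra
  refine ⟨fun x y => ⟨fun hu => ?_, fun hu => ?_⟩, fun x y z => h.div_le_div⟩
  · exact not_lt.1 fun hv => hu.not_gt (h.lt_of_lt hv)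
  · exact not_le.1 fun hv => hu.not_ge (h.le_of_le hv)

theorem stmt1 {X : Type} [Fintype X] [Nonempty X] (u v : X → ℝ)
    (hra : ∀ (x : X) (p : X → ℝ), IsDist p →
      (((∑ y, v y * p y) ≥ v x → (∑ y, u y * p y) ≥ u x) ∧
       ((∑ y, v y * p y) > v x → (∑ y, u y * p y) > u x))) :
    (∀ x y : X, (u x ≥ u y → v x ≥ v y) ∧ (u x > u y → v x > v y)) ∧
    (∀ x y z : X, u x < u y → u y < u z →
      (u z - u y) / (u y - u x) ≥ (v z - v y) / (v y - v x)) :=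
  stmt1_general u v hra
end

section
/- A Lebesgue-measurable function f : ℝ → ℝ is concave if and only if for all x, y ∈ ℝ, (1/2)·f(x) + (1/2)·f(y) ≤ f((1/2)x + (1/2)y) (Sierpiński's theorem). -/
open Finset

/-!
A midpoint concave `f` is bounded below near every point `x`: the sets
`Eₙ = {y | -n ≤ f (x + y) ∧ -n ≤ f (x - y)}` cover `ℝ`, so one of them has positive measure, and by
Steinhaus' theorem `Eₙ - Eₙ` is a neighbourhood of `0`; but `x + (u - v) / 2` is the midpoint of
`x + u` and `x - v`. Iterating midpoint concavity towards `x`, a lower bound `m` on a ball of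
radius `ρ` gives `|f z - f x| ≤ (f x - m) / 2 ^ n` on the ball of radius `ρ / 2 ^ n`, so `f` is
continuous. Finally, for fixed `x, y` the set of `t` with
`t * f x + (1 - t) * f y ≤ f (t * x + (1 - t) * y)` is closed, contains `0` and `1` and is closed
under midpoints, so it contains the dense set of dyadic rationals in `[0, 1]`, hence `[0, 1]`.
-/

open Set Filter Topology MeasureTheory

def MidpointConcave (f : ℝ → ℝ) : Prop :=
  ∀ x y : ℝ, (f x + f y) / 2 ≤ f ((x + y) / 2)

theorem midpointConcave_iff {f : ℝ → ℝ} : MidpointConcave f ↔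
    ∀ x y : ℝ, (1/2) * f x + (1/2) * f y ≤ f ((1/2) * x + (1/2) * y) := by
  refine forall₂_congr fun x y => ?_
  rw [show (1 / 2) * x + (1 / 2) * y = (x + y) / 2 by ring,
    show (1 / 2) * f x + (1 / 2) * f y = (f x + f y) / 2 by ring]

theorem ConcaveOn.midpointConcave {f : ℝ → ℝ} (hf : ConcaveOn ℝ Set.univ f) :
    MidpointConcave f := by
  intro x y
  have h := hf.2 (Set.mem_univ x) (Set.mem_univ y) (by norm_num : (0 : ℝ) ≤ 1 / 2)
    (by norm_num : (0 : ℝ) ≤ 1 / 2) (by norm_num)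
  simp only [smul_eq_mul] at h
  rw [show (x + y) / 2 = 1 / 2 * x + 1 / 2 * y by ring]
  linarith

theorem dyadic_mem_of_midpoint_mem {T : Set ℝ} (h0 : (0 : ℝ) ∈ T) (h1 : (1 : ℝ) ∈ T)
    (hmid : ∀ s ∈ T, ∀ t ∈ T, (s + t) / 2 ∈ T) (n k : ℕ) (hk : k ≤ 2 ^ n) :
    (k : ℝ) / 2 ^ n ∈ T := by
  induction n generalizing k with
  | zero =>
    interval_cases k <;> simpa
  | succ n ih =>
    have key : (k : ℝ) / 2 ^ (n + 1) =
        (((k - k / 2 : ℕ) : ℝ) / 2 ^ n + ((k / 2 : ℕ) : ℝ) / 2 ^ n) / 2 := by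
      rw [Nat.cast_sub (Nat.div_le_self k 2), pow_succ]
      ring
    rw [key]
    exact hmid _ (ih _ (by rw [pow_succ] at hk; omega)) _ (ih _ (by rw [pow_succ] at hk; omega))

theorem Icc_subset_of_isClosed_of_midpoint_mem {T : Set ℝ} (hT : IsClosed T) (h0 : (0 : ℝ) ∈ T)
    (h1 : (1 : ℝ) ∈ T) (hmid : ∀ s ∈ T, ∀ t ∈ T, (s + t) / 2 ∈ T) : Set.Icc 0 1 ⊆ T := by
  rintro a ⟨ha0, ha1⟩
  have hlim : Tendsto (fun n : ℕ => (⌊a * 2 ^ n⌋₊ : ℝ) / 2 ^ n) atTop (𝓝 a) :=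
    (tendsto_nat_floor_mul_div_atTop ha0).comp
      (tendsto_pow_atTop_atTop_of_one_lt one_lt_two)
  refine hT.mem_of_tendsto hlim (Eventually.of_forall fun n => ?_)
  refine dyadic_mem_of_midpoint_mem h0 h1 hmid n _ ?_
  have : a * 2 ^ n ≤ ((2 ^ n : ℕ) : ℝ) := by
    push_cast
    nlinarith [pow_pos (two_pos : (0 : ℝ) < 2) n]
  exact (Nat.floor_le_floor this).trans (Nat.floor_natCast _).le

namespace MidpointConcave

variable {f : ℝ → ℝ}

theorem concaveOn_univ (hf : MidpointConcave f) (hc : Continuous f) :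
    ConcaveOn ℝ Set.univ f := by
  refine ⟨convex_univ, fun x _ y _ a b ha hb hab => ?_⟩
  obtain rfl : b = 1 - a := by linarith
  let T := {t : ℝ | t * f x + (1 - t) * f y ≤ f (t * x + (1 - t) * y)}
  have hT : IsClosed T := isClosed_le (by fun_prop) (by fun_prop)
  have hTmid : ∀ s ∈ T, ∀ t ∈ T, (s + t) / 2 ∈ T := by
    intro s hs t ht
    have h := hf (s * x + (1 - s) * y) (t * x + (1 - t) * y)
    rw [show (s * x + (1 - s) * y + (t * x + (1 - t) * y)) / 2
      = (s + t) / 2 * x + (1 - (s + t) / 2) * y by ring] at h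
    simp only [T, mem_ofPred_eq] at hs ht ⊢
    linarith
  have := Icc_subset_of_isClosed_of_midpoint_mem hT (by simp [T]) (by simp [T]) hTmid
    ⟨ha, by linarith⟩
  simpa [T] using this

theorem add_div_two_pow_le (hf : MidpointConcave f) (x y : ℝ) (n : ℕ) :
    f x + (f y - f x) / 2 ^ n ≤ f (x + (y - x) / 2 ^ n) := by
  induction n with
  | zero => simp
  | succ n ih =>
    have h := hf x (x + (y - x) / 2 ^ n)
    have e : (x + (x + (y - x) / 2 ^ n)) / 2 = x + (y - x) / 2 ^ (n + 1) := by ring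
    rw [e] at h
    calc f x + (f y - f x) / 2 ^ (n + 1) = (f x + (f x + (f y - f x) / 2 ^ n)) / 2 := by ring
      _ ≤ _ := by linarith

theorem abs_sub_le_of_forall_le {x ρ m : ℝ} (hf : MidpointConcave f)
    (hm : ∀ z, |z - x| < ρ → m ≤ f z) (n : ℕ) {z : ℝ} (hz : |z - x| < ρ / 2 ^ n) :
    |f z - f x| ≤ (f x - m) / 2 ^ n := by
  have h2n : (0 : ℝ) < 2 ^ n := by positivity
  have hball : ∀ s : ℝ, |s| < ρ / 2 ^ n → f x - (f x - m) / 2 ^ n ≤ f (x + s) := by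
    intro s hs
    have hy : |(x + 2 ^ n * s) - x| < ρ := by
      rw [add_sub_cancel_left, abs_mul, abs_of_pos h2n]
      rwa [lt_div_iff₀ h2n, mul_comm] at hs
    have h := hf.add_div_two_pow_le x (x + 2 ^ n * s) n
    rw [add_sub_cancel_left, mul_div_cancel_left₀ _ h2n.ne'] at h
    have := div_le_div_of_nonneg_right (sub_le_sub_right (hm _ hy) (f x)) h2n.le
    linarith [show (m - f x) / 2 ^ n = -((f x - m) / 2 ^ n) by ring]
  have hlow := hball (z - x) hz
  have hhigh := hball (x - z) (by rwa [abs_sub_comm])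
  have hmz := hf z (x + (x - z))
  rw [add_sub_cancel] at hlow
  rw [show (z + (x + (x - z))) / 2 = x by ring] at hmz
  rw [abs_le]
  constructor <;> linarith

theorem continuousAt_of_eventually_le {x m : ℝ} (hf : MidpointConcave f)
    (hm : ∀ᶠ z in 𝓝 x, m ≤ f z) : ContinuousAt f x := by
  obtain ⟨ρ, hρ, hball⟩ := Metric.eventually_nhds_iff.1 hm
  rw [Metric.continuousAt_iff]
  intro ε hε
  have hmx : m ≤ f x := hball (by simpa using hρ)
  obtain ⟨n, hn⟩ := exists_pow_lt_of_lt_one (div_pos hε (by linarith : 0 < f x - m + 1))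
    (by norm_num : (1 / 2 : ℝ) < 1)
  refine ⟨ρ / 2 ^ n, by positivity, fun z hz => ?_⟩
  rw [Real.dist_eq] at hz ⊢
  have h := hf.abs_sub_le_of_forall_le (fun z hz => hball (by rwa [Real.dist_eq])) n hz
  rw [one_div_pow] at hn
  calc |f z - f x| ≤ (f x - m) / 2 ^ n := h
    _ < (f x - m + 1) * (1 / 2 ^ n) := by rw [mul_one_div]; gcongr; linarith
    _ < (f x - m + 1) * (ε / (f x - m + 1)) := by gcongr
    _ = ε := mul_div_cancel₀ ε (by linarith)

theorem exists_eventually_le_of_measurable (hf : MidpointConcave f) (hmeas : Measurable f)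
    (x : ℝ) : ∃ m, ∀ᶠ z in 𝓝 x, m ≤ f z := by
  let E : ℕ → Set ℝ := fun n => {y | -(n : ℝ) ≤ f (x + y) ∧ -(n : ℝ) ≤ f (x - y)}
  have hE : ∀ n, MeasurableSet (E n) := fun n =>
    (measurableSet_le measurable_const (hmeas.comp (measurable_const_add x))).inter
      (measurableSet_le measurable_const (hmeas.comp (measurable_const_sub x)))
  have hcover : ⋃ n, E n = Set.univ := eq_univ_of_forall fun y => by
    obtain ⟨n, hn⟩ := exists_nat_ge (max (-f (x + y)) (-f (x - y)))
    rw [max_le_iff] at hn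
    exact mem_iUnion.2 ⟨n, neg_le.1 hn.1, neg_le.1 hn.2⟩
  obtain ⟨n, hn⟩ : ∃ n, 0 < volume (E n) := by
    by_contra! h
    have := measure_iUnion_null fun n => nonpos_iff_eq_zero.1 (h n)
    rw [hcover, Real.volume_univ] at this
    exact ENNReal.top_ne_zero this
  have hdiff := Measure.sub_mem_nhds_zero_of_addHaar_pos volume (E n) (hE n) hn
  have htend : Tendsto (fun z => 2 * (z - x)) (𝓝 x) (𝓝 0) := by
    simpa using ((continuous_sub_right x).const_mul 2).tendsto x
  refine ⟨-n, (htend.eventually_mem hdiff).mono fun z hz => ?_⟩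
  obtain ⟨u, hu, v, hv, huv⟩ := Set.mem_sub.1 hz
  have h := hf (x + u) (x - v)
  rw [show (x + u + (x - v)) / 2 = z by linarith] at h
  linarith [hu.1, hv.2]

theorem continuous_of_measurable (hf : MidpointConcave f) (hmeas : Measurable f) :
    Continuous f :=
  continuous_iff_continuousAt.2 fun x =>
    let ⟨_, hm⟩ := hf.exists_eventually_le_of_measurable hmeas x
    hf.continuousAt_of_eventually_le hm

end MidpointConcave

theorem stmt2 (f : ℝ → ℝ) (hf : Measurable f) :
    ConcaveOn ℝ Set.univ f ↔
      ∀ x y : ℝ, (1/2) * f x + (1/2) * f y ≤ f ((1/2) * x + (1/2) * y) := by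
  rw [← midpointConcave_iff]
  exact ⟨ConcaveOn.midpointConcave, fun h => h.concaveOn_univ (h.continuous_of_measurable hf)⟩
end

section
/- For every ε ∈ (0, 1/2), every nonempty open interval I ⊆ ℝ, and every weakly increasing non-constant function f : I → ℝ, there exist u < v in I and α ∈ [1/2, 1/2 + ε] such that α·f(v) + (1−α)·f(u) > f((1/2)u + (1/2)v). -/
open Finset

theorem stmt3 (ε : ℝ) (hε : ε ∈ Set.Ioo (0 : ℝ) (1/2))
    (I : Set ℝ) (hI : IsOpen I) (hIne : I.Nonempty) (hIconn : I.OrdConnected)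
    (f : ℝ → ℝ) (hmono : MonotoneOn f I) (hnc : ¬ ∃ c : ℝ, ∀ x ∈ I, f x = c) :
    ∃ u ∈ I, ∃ v ∈ I, u < v ∧ ∃ α ∈ Set.Icc (1/2 : ℝ) (1/2 + ε),
      α * f v + (1 - α) * f u > f ((1/2) * u + (1/2) * v) := by
  obtain ⟨hε0, hε2⟩ := hε
  by_contra hcon
  push_neg at hcon
  obtain ⟨β, hβdef⟩ : ∃ t : ℝ, t = 1/2 + ε := ⟨_, rfl⟩
  have hβmem : β ∈ Set.Icc (1/2 : ℝ) (1/2 + ε) := ⟨by rw [hβdef]; linarith, le_of_eq hβdef⟩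
  have hβpos : (0:ℝ) < β := by rw [hβdef]; linarith
  have hβlt1 : β < 1 := by rw [hβdef]; linarith
  have hβhalf : (1/2 : ℝ) < β := by rw [hβdef]; linarith
  have H : ∀ u v : ℝ, u ∈ I → v ∈ I → u < v →
      β * f v + (1 - β) * f u ≤ f ((1/2) * u + (1/2) * v) :=
    fun u v hu hv huv => hcon u hu v hv huv β hβmem
  -- find a < b in I with f a < f b
  obtain ⟨x0, hx0⟩ := hIne
  push_neg at hnc
  obtain ⟨y, hyI, hy⟩ := hnc (f x0)
  obtain ⟨a, b, haI, hbI, hab, hfab⟩ : ∃ a b, a ∈ I ∧ b ∈ I ∧ a < b ∧ f a < f b := by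
    rcases lt_trichotomy y x0 with h | h | h
    · exact ⟨y, x0, hyI, hx0, h, lt_of_le_of_ne (hmono hyI hx0 h.le) hy⟩
    · exact absurd (by rw [h]) hy
    · exact ⟨x0, y, hx0, hyI, h, lt_of_le_of_ne (hmono hx0 hyI h.le) (Ne.symm hy)⟩
  -- points a' < a and b' > b inside I
  obtain ⟨δa, hδa, hballa⟩ := Metric.isOpen_iff.1 hI a haI
  obtain ⟨δb, hδb, hballb⟩ := Metric.isOpen_iff.1 hI b hbI
  obtain ⟨a', ha'def⟩ : ∃ t : ℝ, t = a - δa/2 := ⟨_, rfl⟩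
  obtain ⟨b', hb'def⟩ : ∃ t : ℝ, t = b + δb/2 := ⟨_, rfl⟩
  have ha'a : a' < a := by rw [ha'def]; linarith
  have hbb' : b < b' := by rw [hb'def]; linarith
  have ha'I : a' ∈ I := hballa (by
    rw [Metric.mem_ball, Real.dist_eq, ha'def,
      show a - δa/2 - a = -(δa/2) by ring, abs_neg, abs_of_pos (by linarith)]
    linarith)
  have hb'I : b' ∈ I := hballb (by
    rw [Metric.mem_ball, Real.dist_eq, hb'def,
      show b + δb/2 - b = δb/2 by ring, abs_of_pos (by linarith)]
    linarith)
  have hIcc : Set.Icc a' b' ⊆ I := hIconn.out ha'I hb'I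
  -- quantities
  obtain ⟨r, hrdef⟩ : ∃ t : ℝ, t = (1 - β)/β := ⟨_, rfl⟩
  have hr0 : 0 < r := by rw [hrdef]; exact div_pos (by linarith) hβpos
  have hr1 : r < 1 := by
    rw [hrdef, div_lt_one hβpos]; linarith
  obtain ⟨d, hddef⟩ : ∃ t : ℝ, t = f b - f a := ⟨_, rfl⟩
  have hd : 0 < d := by rw [hddef]; linarith
  obtain ⟨M, hMdef⟩ : ∃ t : ℝ, t = f b' - f a' := ⟨_, rfl⟩
  have hfa' : f a' ≤ f a := hmono ha'I haI ha'a.le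
  have hfb' : f b ≤ f b' := hmono hbI hb'I hbb'.le
  have hM : 0 < M := by rw [hMdef]; linarith
  -- choose k with r^k small
  have hdrM : (0:ℝ) < d * (1 - r) / M := div_pos (mul_pos hd (by linarith)) hM
  obtain ⟨k, hk⟩ := exists_pow_lt_of_lt_one hdrM hr1
  -- choose n
  obtain ⟨n, hndef⟩ : ∃ t : ℕ, t = max 1 ⌈(k * (b - a)) / (a - a')⌉₊ := ⟨_, rfl⟩
  have hn1 : 1 ≤ n := hndef ▸ le_max_left _ _
  have hnpos : (0:ℝ) < (n:ℝ) := by exact_mod_cast hn1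
  obtain ⟨h, hhdef⟩ : ∃ t : ℝ, t = (b - a)/n := ⟨_, rfl⟩
  have hh : 0 < h := by rw [hhdef]; exact div_pos (by linarith) hnpos
  have hnh : (n:ℝ) * h = b - a := by
    rw [hhdef]; field_simp
  have hkh : (k:ℝ) * h ≤ a - a' := by
    have h1 : (k * (b - a)) / (a - a') ≤ (⌈(k * (b - a)) / (a - a')⌉₊ : ℝ) :=
      Nat.le_ceil _
    have h2 : (⌈(k * (b - a)) / (a - a')⌉₊ : ℝ) ≤ (n:ℝ) := by
      exact_mod_cast hndef ▸ le_max_right 1 ⌈(k * (b - a)) / (a - a')⌉₊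
    have h3 : (k * (b - a)) / (a - a') ≤ (n:ℝ) := h1.trans h2
    have h4 : (k:ℝ) * (b - a) ≤ (n:ℝ) * (a - a') := by
      rw [div_le_iff₀ (by linarith : (0:ℝ) < a - a')] at h3
      linarith
    rw [hhdef, ← mul_div_assoc, div_le_iff₀ hnpos]
    linarith [h4]
  -- the chain
  obtain ⟨s, hsdef⟩ : ∃ t : ℝ, t = a - k * h := ⟨_, rfl⟩
  obtain ⟨x, hxdef⟩ : ∃ t : ℕ → ℝ, ∀ i : ℕ, t i = s + i * h := ⟨_, fun _ => rfl⟩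
  have hxk : x k = a := by rw [hxdef, hsdef]; ring
  have hxkn : x (k + n) = b := by
    rw [hxdef, hsdef]
    push_cast
    have : ((k:ℝ) + n) * h = k * h + (b - a) := by rw [add_mul, hnh]
    linarith [this]
  have hxmono : ∀ i j : ℕ, i ≤ j → x i ≤ x j := by
    intro i j hij
    rw [hxdef, hxdef]
    have h1 : (i:ℝ) ≤ (j:ℝ) := by exact_mod_cast hij
    have h2 := mul_le_mul_of_nonneg_right h1 hh.le
    linarith
  have hxlt : ∀ i j : ℕ, i < j → x i < x j := by
    intro i j hij
    rw [hxdef, hxdef]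
    have h1 : (i:ℝ) < (j:ℝ) := by exact_mod_cast hij
    have h2 := mul_lt_mul_of_pos_right h1 hh
    linarith
  have hxmem : ∀ i : ℕ, i ≤ k + n → x i ∈ I := by
    intro i hi
    apply hIcc
    constructor
    · have : a' ≤ x 0 := by
        simp only [hxdef]
        push_cast
        simp only [hsdef]
        linarith [hkh]
      exact this.trans (hxmono 0 i (Nat.zero_le _))
    · have := hxmono i (k+n) hi
      rw [hxkn] at this
      linarith
  -- increments are nonneg
  have hΔ0 : ∀ i : ℕ, i + 1 ≤ k + n → 0 ≤ f (x (i+1)) - f (x i) := by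
    intro i hi
    have := hmono (hxmem i (by omega)) (hxmem (i+1) hi) (hxmono i (i+1) (by omega))
    linarith
  -- step inequality
  have hstep : ∀ i : ℕ, i + 2 ≤ k + n →
      f (x (i+2)) - f (x (i+1)) ≤ r * (f (x (i+1)) - f (x i)) := by
    intro i hi
    have hmid : (1/2) * x i + (1/2) * x (i+2) = x (i+1) := by
      rw [hxdef, hxdef, hxdef]
      push_cast
      ring
    have hkey := H (x i) (x (i+2)) (hxmem i (by omega)) (hxmem (i+2) hi)
      (hxlt i (i+2) (by omega))
    rw [hmid] at hkey
    rw [hrdef, div_mul_eq_mul_div, le_div_iff₀ hβpos]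
    linarith [hkey]
  -- geometric decay
  have hgeo : ∀ i : ℕ, i + 1 ≤ k + n →
      f (x (i+1)) - f (x i) ≤ r ^ i * (f (x 1) - f (x 0)) := by
    intro i
    induction i with
    | zero => intro _; simp
    | succ j ih =>
      intro hj
      have h1 : f (x (j+2)) - f (x (j+1)) ≤ r * (f (x (j+1)) - f (x j)) := hstep j hj
      have h2 := ih (by omega)
      calc f (x (j+1+1)) - f (x (j+1)) ≤ r * (f (x (j+1)) - f (x j)) := h1
        _ ≤ r * (r ^ j * (f (x 1) - f (x 0))) := by
            apply mul_le_mul_of_nonneg_left h2 hr0.le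
        _ = r ^ (j+1) * (f (x 1) - f (x 0)) := by ring
  -- D0 bound
  have hD0 : f (x 1) - f (x 0) ≤ M := by
    have h1 : a' ≤ x 0 := by
      rw [hxdef, hsdef]; push_cast; linarith [hkh]
    have h2 : x 1 ≤ b := by
      have := hxmono 1 (k+n) (by omega)
      rw [hxkn] at this; exact this
    have := hmono ha'I (hxmem 0 (by omega)) h1
    have := hmono (hxmem 1 (by omega)) hbI h2
    rw [hMdef]
    linarith
  have hD0nn : 0 ≤ f (x 1) - f (x 0) := hΔ0 0 (by omega)
  -- telescoping
  have htel : ∑ j ∈ Finset.range n, (f (x (k + j + 1)) - f (x (k + j))) = d := by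
    have := Finset.sum_range_sub (fun j => f (x (k + j))) n
    simp only [Nat.add_zero] at this
    rw [hddef, ← hxk, ← hxkn]
    rw [← this]
    apply Finset.sum_congr rfl
    intro j _
    rfl
  -- bound the sum
  have hsum : ∑ j ∈ Finset.range n, (f (x (k + j + 1)) - f (x (k + j)))
      ≤ r ^ k * (f (x 1) - f (x 0)) * (∑ j ∈ Finset.range n, r ^ j) := by
    rw [Finset.mul_sum]
    apply Finset.sum_le_sum
    intro j hj
    have hjn : j < n := Finset.mem_range.1 hj
    have h1 : f (x (k + j + 1)) - f (x (k + j)) ≤ r ^ (k + j) * (f (x 1) - f (x 0)) :=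
      hgeo (k + j) (by omega)
    calc f (x (k + j + 1)) - f (x (k + j)) ≤ r ^ (k + j) * (f (x 1) - f (x 0)) := h1
      _ = r ^ k * (f (x 1) - f (x 0)) * r ^ j := by rw [pow_add]; ring
  have hgeosum : (∑ j ∈ Finset.range n, r ^ j) ≤ 1 / (1 - r) := by
    rw [le_div_iff₀ (by linarith : (0:ℝ) < 1 - r)]
    linarith [geom_sum_mul r n, pow_nonneg hr0.le n]
  -- final contradiction
  have hfinal : d ≤ r ^ k * M / (1 - r) := by
    have h1 : d ≤ r ^ k * (f (x 1) - f (x 0)) * (∑ j ∈ Finset.range n, r ^ j) := by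
      rw [← htel]; exact hsum
    have h2 : r ^ k * (f (x 1) - f (x 0)) * (∑ j ∈ Finset.range n, r ^ j)
        ≤ r ^ k * (f (x 1) - f (x 0)) * (1 / (1 - r)) := by
      exact mul_le_mul_of_nonneg_left hgeosum (mul_nonneg (pow_nonneg hr0.le k) hD0nn)
    have h3 : r ^ k * (f (x 1) - f (x 0)) * (1 / (1 - r)) ≤ r ^ k * M * (1 / (1 - r)) := by
      exact mul_le_mul_of_nonneg_right
        (mul_le_mul_of_nonneg_left hD0 (pow_nonneg hr0.le k))
        (le_of_lt (div_pos one_pos (by linarith)))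
    calc d ≤ _ := h1
      _ ≤ _ := h2
      _ ≤ r ^ k * M * (1 / (1 - r)) := h3
      _ = r ^ k * M / (1 - r) := by ring
  have hcontra : r ^ k * M / (1 - r) < d := by
    have h1r : (0:ℝ) < 1 - r := by linarith
    rw [div_lt_iff₀ h1r]
    have hk' : r ^ k * M < d * (1 - r) := by
      have h5 := mul_lt_mul_of_pos_right hk hM
      rwa [div_mul_cancel₀ _ (ne_of_gt hM)] at h5
    linarith [hk']
  linarith
end

section
/- Let S be a finite set of situations. For a finite nonempty set X, a nonempty S' ⊆ S, and U : X × S → ℝ, define NSD(X,S',U) as the set of x ∈ X such that no probability distribution p on X satisfies ∑_y U(y,s)·p(y) > U(x,s) for all s ∈ S'. Fix functions φ_s : ℝ → ℝ for each s ∈ S, each concave and weakly increasing, and let Φ(u)_s = φ_s(u_s). Then NSD(X,S',U) ⊆ NSD(X,S',Φ∘U) for every such finite problem, where (Φ∘U)(x,s) = φ_s(U(x,s)). -/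
open Finset

theorem stmt4 {S : Type} [Fintype S] [Nonempty S]
    (φ : S → ℝ → ℝ)
    (hconc : ∀ s, ConcaveOn ℝ Set.univ (φ s))
    (hmono : ∀ s, Monotone (φ s)) :
    ∀ (X : Type) [Fintype X] [Nonempty X] (S' : Set S), S'.Nonempty →
      ∀ U : X → S → ℝ,
        NSD S' U ⊆ NSD S' (fun x s => φ s (U x s)) := by
  intro X _ _ S' _ U x hx hx'
  apply hx
  obtain ⟨p, hp, hd⟩ := hx'
  refine ⟨p, hp, fun s hs => ?_⟩
  have hjensen : ∑ y, p y • φ s (U y s) ≤ φ s (∑ y, p y • U y s) :=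
    (hconc s).le_map_sum (fun i _ => hp.1 i) hp.2 (fun i _ => Set.mem_univ _)
  have h1 : φ s (U x s) < φ s (∑ y, U y s * p y) := by
    calc φ s (U x s) < ∑ y, φ s (U y s) * p y := hd s hs
    _ = ∑ y, p y • φ s (U y s) := by simp [mul_comm]
    _ ≤ φ s (∑ y, p y • U y s) := hjensen
    _ = φ s (∑ y, U y s * p y) := by simp [mul_comm]
  by_contra hle
  exact absurd (hmono s (not_lt.mp hle)) (not_le.mpr h1)
end

section
/- Let S be a finite set with |S| ≥ 2 and fix functions φ_s : ℝ → ℝ for each s ∈ S, each concave and strictly increasing; let Φ(u)_s = φ_s(u_s). Define NWD(X,S,U) as the set of x ∈ X such that no probability distribution p on X satisfies ∑_y U(y,s)·p(y) ≥ U(x,s) for all s ∈ S with strict inequality for some s ∈ S. Then NWD(X,S,U) ⊆ NWD(X,S,Φ∘U) for every nonempty finite X and every U : X × S → ℝ. -/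
open Finset

theorem stmt5 {S : Type} [Fintype S] (hS : 2 ≤ Fintype.card S)
    (φ : S → ℝ → ℝ)
    (hconc : ∀ s, ConcaveOn ℝ Set.univ (φ s))
    (hmono : ∀ s, StrictMono (φ s)) :
    ∀ (X : Type) [Fintype X] [Nonempty X] (U : X → S → ℝ),
      NWD (Set.univ : Set S) U ⊆ NWD Set.univ (fun x s => φ s (U x s)) := by
  intro X _ _ U x hx
  rintro ⟨p, hp, hge, s0, hs0, hgt⟩
  apply hx
  have jensen : ∀ s : S, ∑ y, φ s (U y s) * p y ≤ φ s (∑ y, U y s * p y) := by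
    intro s
    have h := (hconc s).le_map_sum (t := Finset.univ) (w := p) (p := fun y => U y s)
      (fun i _ => hp.1 i) hp.2 (fun i _ => trivial)
    simpa [smul_eq_mul, mul_comm] using h
  refine ⟨p, hp, fun s _ => ?_, s0, trivial, ?_⟩
  · exact (hmono s).le_iff_le.mp ((hge s trivial).trans (jensen s))
  · exact (hmono s0).lt_iff_lt.mp (lt_of_lt_of_le hgt (jensen s0))
end

section
/- Let S be a finite set with |S| ≥ 2 and fix functions φ_s : ℝ → ℝ for each s ∈ S, each convex and strictly increasing; let Φ(u)_s = φ_s(u_s). Then for every nonempty finite X, every nonempty S' ⊆ S, and every U : X × S → ℝ: NSD(X,S',Φ∘U) ⊆ NSD(X,S',U) and NWD(X,S',Φ∘U) ⊆ NWD(X,S',U). -/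
open Finset

theorem stmt6 {S : Type} [Fintype S] (hS : 2 ≤ Fintype.card S)
    (φ : S → ℝ → ℝ)
    (hconv : ∀ s, ConvexOn ℝ Set.univ (φ s))
    (hmono : ∀ s, StrictMono (φ s)) :
    ∀ (X : Type) [Fintype X] [Nonempty X] (S' : Set S), S'.Nonempty →
      ∀ U : X → S → ℝ,
        NSD S' (fun x s => φ s (U x s)) ⊆ NSD S' U ∧
        NWD S' (fun x s => φ s (U x s)) ⊆ NWD S' U := by
  intro X _ _ S' _hS' U
  have jensen : ∀ (s : S) (p : X → ℝ), IsDist p →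
      φ s (∑ y, U y s * p y) ≤ ∑ y, φ s (U y s) * p y := by
    intro s p hp
    have := (hconv s).map_sum_le (t := Finset.univ) (w := p) (p := fun y => U y s)
      (fun i _ => hp.1 i) hp.2 (fun i _ => Set.mem_univ _)
    simpa [smul_eq_mul, mul_comm] using this
  constructor
  · intro x hx ⟨p, hp, hdom⟩
    exact hx ⟨p, hp, fun s hs =>
      lt_of_lt_of_le (hmono s (hdom s hs)) (jensen s p hp)⟩
  · intro x hx ⟨p, hp, hge, s₀, hs₀, hgt⟩
    exact hx ⟨p, hp,
      fun s hs => le_trans ((hmono s).monotone (hge s hs)) (jensen s p hp),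
      s₀, hs₀, lt_of_lt_of_le (hmono s₀ hgt) (jensen s₀ p hp)⟩
end

section
/- Let S be a finite set with |S| ≥ 2 and let Φ : ℝ^S → ℝ^S be a transformation such that NWD(X,S',U) ⊆ NWD(X,S',Φ∘U) for every finite problem (X,S',U) with S' ⊆ S nonempty. Then Φ is situation-wise: for every s ∈ S there exists φ_s : ℝ → ℝ with Φ(u)_s = φ_s(u_s) for all u ∈ ℝ^S. -/
open Finset

theorem stmt7 {S : Type} [Fintype S] (hS : 2 ≤ Fintype.card S)
    (Φ : (S → ℝ) → (S → ℝ))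
    (h : ∀ (X : Type) [Fintype X] [Nonempty X] (S' : Set S), S'.Nonempty →
      ∀ U : X → S → ℝ,
        NWD S' U ⊆ NWD S' (fun x => Φ (U x))) :
    ∀ s : S, ∃ φs : ℝ → ℝ, ∀ u : S → ℝ, Φ u s = φs (u s) := by
  intro s
  refine ⟨fun t => Φ (fun _ => t) s, fun u => ?_⟩
  set c := Φ (fun _ => u s) s with hc
  set U : Bool → S → ℝ := fun b => if b then u else fun _ => u s with hU
  have hUs : ∀ b, U b s = u s := by intro b; cases b <;> simp [hU]
  have hmem : ∀ x : Bool, x ∈ NWD {s} U := by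
    intro x
    rintro ⟨p, hp, hge, t, ht, hgt⟩
    have hts : t = s := ht
    rw [hts] at hgt
    have hsum : ∑ y, U y s * p y = u s := by
      have : ∀ y : Bool, U y s * p y = u s * p y := fun y => by rw [hUs]
      rw [Fintype.sum_congr _ _ this, ← Finset.mul_sum, hp.2, mul_one]
    rw [hsum, hUs] at hgt
    exact lt_irrefl _ hgt
  have hmem' : ∀ x : Bool, x ∈ NWD {s} (fun x => Φ (U x)) :=
    fun x => h Bool {s} ⟨s, rfl⟩ U (hmem x)
  have hUt : U true = u := by simp [hU]
  have hUf : U false = fun _ => u s := by simp [hU]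
  rcases lt_trichotomy (Φ u s) c with hlt | heq | hgt
  · exfalso
    apply hmem' true
    refine ⟨fun b => if b then 0 else 1, ⟨fun b => by cases b <;> norm_num, by simp⟩, ?_, s, rfl, ?_⟩
    · intro t ht
      have hts : t = s := ht
      rw [hts]
      simp [hUt, hUf]
      exact le_of_lt hlt
    · simpa [hUt, hUf] using hlt
  · exact heq
  · exfalso
    apply hmem' false
    refine ⟨fun b => if b then 1 else 0, ⟨fun b => by cases b <;> norm_num, by simp⟩, ?_, s, rfl, ?_⟩
    · intro t ht
      have hts : t = s := ht
      rw [hts]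
      simp [hUt, hUf]
      exact le_of_lt hgt
    · simpa [hUt, hUf] using hgt
end

section
/- Let S be a finite set with |S| ≥ 2 and let Φ : ℝ^S → ℝ^S satisfy NSD(X,S',U) ⊆ NSD(X,S',Φ∘U) for every finite problem (X,S',U) with S' ⊆ S nonempty. Then Φ is situation-wise: for every s ∈ S there exists φ_s : ℝ → ℝ with Φ(u)_s = φ_s(u_s) for all u ∈ ℝ^S. -/
open Finset

theorem stmt8 {S : Type} [Fintype S] (hS : 2 ≤ Fintype.card S)
    (Φ : (S → ℝ) → (S → ℝ))
    (h : ∀ (X : Type) [Fintype X] [Nonempty X] (S' : Set S), S'.Nonempty →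
      ∀ U : X → S → ℝ,
        NSD S' U ⊆ NSD S' (fun x => Φ (U x))) :
    ∀ s : S, ∃ φs : ℝ → ℝ, ∀ u : S → ℝ, Φ u s = φs (u s) := by
  intro s
  have key : ∀ u v : S → ℝ, u s = v s → Φ v s ≤ Φ u s := by
    intro u v huv
    set U : Bool → S → ℝ := fun b => if b then v else u with hU
    have hfalse : (false : Bool) ∈ NSD ({s} : Set S) U := by
      rintro ⟨p, hp, hgt⟩
      have h1 := hgt s rfl
      have h2 := hp.2
      simp only [Fintype.sum_bool, hU] at h1 h2
      norm_num at h1 h2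
      rw [huv] at h1
      have : v s * p true + v s * p false = v s := by rw [← mul_add, h2, mul_one]
      linarith
    have hmem := h Bool ({s} : Set S) ⟨s, rfl⟩ U hfalse
    by_contra hlt
    push_neg at hlt
    refine hmem ⟨fun b => if b then 1 else 0, ⟨fun b => by by_cases hb : b <;> simp [hb],
      by simp [Fintype.sum_bool]⟩, ?_⟩
    rintro s' rfl
    simpa [Fintype.sum_bool, hU] using hlt
  exact ⟨fun t => Φ (fun _ => t) s, fun u =>
    le_antisymm (key (fun _ => u s) u rfl) (key u (fun _ => u s) rfl)⟩
end

section
/- Let S be a finite set with |S| ≥ 2, let φ_s : ℝ → ℝ for each s ∈ S, and let Φ(u)_s = φ_s(u_s). Suppose NSD(X,S,Φ∘U) ⊆ NSD(X,S,U) for every nonempty finite X and every U : X × S → ℝ (or the same containment with NWD). Then each φ_s is strictly increasing and continuous. -/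
open Finset

def Hyp {S : Type} [Fintype S] (φ : S → ℝ → ℝ) : Prop :=
  (∀ (X : Type) [Fintype X] [Nonempty X] (U : X → S → ℝ),
      NSD (Set.univ : Set S) (fun x s => φ s (U x s)) ⊆ NSD Set.univ U) ∨
  (∀ (X : Type) [Fintype X] [Nonempty X] (U : X → S → ℝ),
      NWD (Set.univ : Set S) (fun x s => φ s (U x s)) ⊆ NWD Set.univ U)


lemma strictmono_of_hyp {S : Type} [Fintype S] (φ : S → ℝ → ℝ) (h : Hyp φ) :
    ∀ s, StrictMono (φ s) := by
  classical
  intro s₀ a b hab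
  by_contra hle
  push_neg at hle
  rcases h with h | h
  · set U : Bool → S → ℝ := fun x _ => if x then b else a with hU
    have hmem : (false : Bool) ∈ NSD (Set.univ : Set S) (fun x s => φ s (U x s)) := by
      rintro ⟨p, hp, hd⟩
      have hd0 := hd s₀ (Set.mem_univ _)
      rw [Fintype.sum_bool] at hd0
      simp only [hU, if_true, if_false, Bool.cond_true] at hd0
      have h1 := hp.1 true
      have h2 := hp.1 false
      have h3 := hp.2
      rw [Fintype.sum_bool] at h3
      norm_num at hd0
      have e1 : φ s₀ a * p true + φ s₀ a * p false = φ s₀ a := by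
        rw [← mul_add, h3, mul_one]
      nlinarith [mul_le_mul_of_nonneg_right hle h1]
    have := h Bool U hmem
    refine this ⟨fun w => if w then 1 else 0, ⟨?_, ?_⟩, ?_⟩
    · intro w; by_cases hw : w <;> simp [hw]
    · rw [Fintype.sum_bool]; simp
    · intro s _
      rw [Fintype.sum_bool]
      simp [hU, hab]
  · set U : Bool → S → ℝ := fun x s => if x = true ∧ s = s₀ then b else a with hU
    have hmem : (false : Bool) ∈ NWD (Set.univ : Set S) (fun x s => φ s (U x s)) := by
      rintro ⟨p, hp, -, s₁, -, hd1⟩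
      rw [Fintype.sum_bool] at hd1
      have h1 := hp.1 true
      have h2 := hp.1 false
      have h3 := hp.2
      rw [Fintype.sum_bool] at h3
      by_cases hs : s₁ = s₀
      · subst hs
        norm_num [hU] at hd1
        have e1 : φ s₁ a * p true + φ s₁ a * p false = φ s₁ a := by
          rw [← mul_add, h3, mul_one]
        nlinarith [mul_le_mul_of_nonneg_right hle h1]
      · simp only [hU, hs, and_false, false_and, if_false] at hd1
        have e1 : φ s₁ a * p true + φ s₁ a * p false = φ s₁ a := by
          rw [← mul_add, h3, mul_one]
        linarith
    have := h Bool U hmem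
    refine this ⟨fun w => if w then 1 else 0, ⟨?_, ?_⟩, ?_, ?_⟩
    · intro w; by_cases hw : w <;> simp [hw]
    · rw [Fintype.sum_bool]; simp
    · intro s _
      rw [Fintype.sum_bool]
      by_cases hs : s = s₀ <;> simp [hU, hs, le_of_lt hab]
    · refine ⟨s₀, Set.mem_univ _, ?_⟩
      rw [Fintype.sum_bool]
      simp [hU, hab]

set_option maxHeartbeats 1000000 in
lemma key {S : Type} [Fintype S] (φ : S → ℝ → ℝ) (h : Hyp φ)
    (hmono : ∀ s, StrictMono (φ s)) (s₀ s₁ : S) (hne : s₁ ≠ s₀)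
    (B₀ t A₀ : ℝ) (h1 : B₀ < t) (h2 : 2 * (t - B₀) < A₀ - B₀) (hta : t ≤ A₀)
    (hblock : (φ s₀ A₀ - φ s₀ t) * (φ s₁ 1 - φ s₁ 0) <
              (φ s₀ t - φ s₀ B₀) * (φ s₁ 0 - φ s₁ (-1))) :
    False := by
  classical
  have hAB : (0:ℝ) < A₀ - B₀ := by linarith
  set U : Fin 3 → S → ℝ :=
    ![fun s => if s = s₀ then t else 0,
      fun s => if s = s₀ then A₀ else if s = s₁ then (-1) else 1,
      fun s => if s = s₀ then B₀ else 1] with hU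
  set q : ℝ := ((t - B₀) / (A₀ - B₀) + 1/2) / 2 with hq
  have hr0 : 0 < (t - B₀) / (A₀ - B₀) := div_pos (by linarith) hAB
  have hr2 : (t - B₀) / (A₀ - B₀) < 1/2 := by
    rw [div_lt_iff₀ hAB]; linarith
  have hq0 : 0 < q := by rw [hq]; linarith
  have hq2 : q < 1/2 := by rw [hq]; linarith
  have hqr : (t - B₀) / (A₀ - B₀) < q := by rw [hq]; linarith
  have hrm : (t - B₀) / (A₀ - B₀) * (A₀ - B₀) = t - B₀ := div_mul_cancel₀ _ (ne_of_gt hAB)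
  set p : Fin 3 → ℝ := ![0, q, 1 - q] with hp
  have hpdist : IsDist p := by
    constructor
    · intro w; fin_cases w <;> simp [hp] <;> linarith
    · rw [Fin.sum_univ_three]; simp [hp]
  have hdom : ∀ s, (∑ y, U y s * p y) > U 0 s := by
    intro s
    rw [Fin.sum_univ_three]
    simp only [hU, hp, Matrix.cons_val_zero, Matrix.cons_val_one, Matrix.head_cons,
      Matrix.cons_val_two, Matrix.tail_cons]
    by_cases hs : s = s₀
    · simp only [hs, if_pos rfl, if_true]
      nlinarith [mul_pos (sub_pos.2 hqr) hAB, hrm]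
    · by_cases hs1 : s = s₁
      · subst hs1
        simp only [if_neg hs, if_pos rfl, if_true]
        nlinarith
      · simp only [if_neg hs, if_neg hs1]
        nlinarith
  have hblockmem : ∀ p' : Fin 3 → ℝ, IsDist p' →
      (∀ s, (∑ y, φ s (U y s) * p' y) ≥ φ s (U 0 s)) →
      (∃ s, (∑ y, φ s (U y s) * p' y) > φ s (U 0 s)) → False := by
    intro p' hp' hweak hstr
    obtain ⟨sw, hsw⟩ := hstr
    have hQ := hp'.1 0
    have hP := hp'.1 1
    have hR := hp'.1 2
    have hsum := hp'.2
    rw [Fin.sum_univ_three] at hsum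
    have hi := hweak s₀
    rw [Fin.sum_univ_three] at hi
    simp only [hU, Matrix.cons_val_zero, Matrix.cons_val_one, Matrix.head_cons,
      Matrix.cons_val_two, Matrix.tail_cons, if_pos rfl, if_true] at hi
    have hii := hweak s₁
    rw [Fin.sum_univ_three] at hii
    simp only [hU, Matrix.cons_val_zero, Matrix.cons_val_one, Matrix.head_cons,
      Matrix.cons_val_two, Matrix.tail_cons, if_neg hne, if_pos rfl, if_true] at hii
    have hbpos : 0 < φ s₀ t - φ s₀ B₀ := by have := (hmono s₀) h1; linarith
    have hapos : 0 ≤ φ s₀ A₀ - φ s₀ t := by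
      have := (hmono s₀).monotone hta; linarith
    have hdpos : 0 < φ s₁ 1 - φ s₁ 0 := by
      have := (hmono s₁) (by norm_num : (0:ℝ) < 1); linarith
    have hepos : 0 < φ s₁ 0 - φ s₁ (-1) := by
      have := (hmono s₁) (by norm_num : (-1:ℝ) < 0); linarith
    have e1 : φ s₀ t * (p' 0 + p' 1 + p' 2) = φ s₀ t := by rw [hsum, mul_one]
    have e2 : φ s₁ 0 * (p' 0 + p' 1 + p' 2) = φ s₁ 0 := by rw [hsum, mul_one]
    have i1 : p' 2 * (φ s₀ t - φ s₀ B₀) ≤ p' 1 * (φ s₀ A₀ - φ s₀ t) := by nlinarith [e1]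
    have i2 : p' 1 * (φ s₁ 0 - φ s₁ (-1)) ≤ p' 2 * (φ s₁ 1 - φ s₁ 0) := by nlinarith [e2]
    -- p' 1 + p' 2 > 0 from strictness
    have hPR : 0 < p' 1 + p' 2 := by
      rw [Fin.sum_univ_three] at hsw
      simp only [hU, Matrix.cons_val_zero, Matrix.cons_val_one, Matrix.head_cons,
        Matrix.cons_val_two, Matrix.tail_cons] at hsw
      by_cases hs : sw = s₀
      · simp only [hs, if_pos rfl, if_true] at hsw
        by_contra hc
        push_neg at hc
        have e1 : p' 1 = 0 := by linarith
        have e2 : p' 2 = 0 := by linarith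
        rw [e1, e2] at hsw
        have : p' 0 = 1 := by linarith
        rw [this] at hsw
        simp at hsw
      · by_cases hs1 : sw = s₁
        · subst hs1
          simp only [if_neg hs, if_pos rfl, if_true] at hsw
          by_contra hc
          push_neg at hc
          have e1 : p' 1 = 0 := by linarith
          have e2 : p' 2 = 0 := by linarith
          rw [e1, e2] at hsw
          have : p' 0 = 1 := by linarith
          rw [this] at hsw
          simp at hsw
        · simp only [if_neg hs, if_neg hs1] at hsw
          by_contra hc
          push_neg at hc
          have e1 : p' 1 = 0 := by linarith
          have e2 : p' 2 = 0 := by linarith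
          rw [e1, e2] at hsw
          have : p' 0 = 1 := by linarith
          rw [this] at hsw
          simp at hsw
    -- contradiction
    by_cases hP0 : p' 1 = 0
    · rw [hP0] at i1
      have hR0 : p' 2 ≤ 0 := by nlinarith
      linarith
    · have hPpos : 0 < p' 1 := lt_of_le_of_ne hP (Ne.symm hP0)
      have hRpos : 0 < p' 2 := by nlinarith
      have f := mul_le_mul i1 i2 (by positivity) (by positivity)
      nlinarith [mul_pos (mul_pos hPpos hRpos) (sub_pos.2 hblock)]
  rcases h with h | h
  · have hmem : (0 : Fin 3) ∈ NSD (Set.univ : Set S) (fun x s => φ s (U x s)) := by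
      rintro ⟨p', hp', hd⟩
      exact hblockmem p' hp' (fun s => le_of_lt (hd s (Set.mem_univ _)))
        ⟨s₀, hd s₀ (Set.mem_univ _)⟩
    exact (h (Fin 3) U hmem) ⟨p, hpdist, fun s _ => hdom s⟩
  · have hmem : (0 : Fin 3) ∈ NWD (Set.univ : Set S) (fun x s => φ s (U x s)) := by
      rintro ⟨p', hp', hw, sw, -, hsw⟩
      exact hblockmem p' hp' (fun s => hw s (Set.mem_univ _)) ⟨sw, hsw⟩
    exact (h (Fin 3) U hmem) ⟨p, hpdist, fun s _ => le_of_lt (hdom s),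
      ⟨s₀, Set.mem_univ _, hdom s₀⟩⟩

lemma cont_of_limits (f : ℝ → ℝ) (hmono : StrictMono f) (c : ℝ)
    (hR : ∀ ε > 0, ∃ A > c, f A < f c + ε)
    (hL : ∀ ε > 0, ∃ B < c, f B > f c - ε) :
    ContinuousAt f c := by
  rw [Metric.continuousAt_iff]
  intro ε hε
  obtain ⟨A, hA, hfA⟩ := hR ε hε
  obtain ⟨B, hB, hfB⟩ := hL ε hε
  refine ⟨min (A - c) (c - B), by simp [hA, hB], ?_⟩
  intro x hx
  rw [Real.dist_eq] at hx ⊢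
  have hx' := abs_lt.1 hx
  have h1 : x < A := by
    have := min_le_left (A - c) (c - B); linarith [hx'.2]
  have h2 : B < x := by
    have := min_le_right (A - c) (c - B); linarith [hx'.1]
  have g1 : f x ≤ f A := hmono.monotone h1.le
  have g2 : f B ≤ f x := hmono.monotone h2.le
  rw [abs_lt]
  constructor <;> linarith

lemma cont_of_key {S : Type} [Fintype S] (hS : 2 ≤ Fintype.card S) (φ : S → ℝ → ℝ)
    (hmono : ∀ s, StrictMono (φ s))
    (key : ∀ (s₀ s₁ : S), s₁ ≠ s₀ → ∀ (B₀ t A₀ : ℝ), B₀ < t → 2 * (t - B₀) < A₀ - B₀ → t ≤ A₀ →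
      (φ s₀ A₀ - φ s₀ t) * (φ s₁ 1 - φ s₁ 0) < (φ s₀ t - φ s₀ B₀) * (φ s₁ 0 - φ s₁ (-1)) → False) :
    ∀ s, Continuous (φ s) := by
  intro s₀
  rw [continuous_iff_continuousAt]
  intro c
  obtain ⟨s₁, hs₁⟩ := Fintype.exists_ne_of_one_lt_card (by omega) s₀
  have hdpos : 0 < φ s₁ 1 - φ s₁ 0 := by
    have := hmono s₁ (show (0:ℝ) < 1 by norm_num); linarith
  have hepos : 0 < φ s₁ 0 - φ s₁ (-1) := by
    have := hmono s₁ (show (-1:ℝ) < 0 by norm_num); linarith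
  set d := φ s₁ 1 - φ s₁ 0 with hd
  set e := φ s₁ 0 - φ s₁ (-1) with he
  by_cases hA : ∃ ε > 0, ∀ A > c, φ s₀ A ≥ φ s₀ c + ε
  · exfalso
    obtain ⟨ε, hε, hAll⟩ := hA
    set L := sInf ((φ s₀) '' (Set.Ioi c)) with hL
    have hnemp : ((φ s₀) '' (Set.Ioi c)).Nonempty :=
      ⟨φ s₀ (c+1), ⟨c+1, by simp, rfl⟩⟩
    have hbdd : BddBelow ((φ s₀) '' (Set.Ioi c)) :=
      ⟨φ s₀ c + ε, by rintro y ⟨x, hx, rfl⟩; exact hAll x hx⟩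
    have hLge : φ s₀ c + ε ≤ L :=
      le_csInf hnemp (by rintro y ⟨x, hx, rfl⟩; exact hAll x hx)
    have hεed : 0 < ε * e / d := by positivity
    obtain ⟨y, ⟨A₀, hA₀c, rfl⟩, hy⟩ :=
      exists_lt_of_csInf_lt hnemp (show L < L + ε * e / d by linarith)
    rw [Set.mem_Ioi] at hA₀c
    have htc : c < c + (A₀ - c)/4 := by linarith
    have htA : c + (A₀ - c)/4 < A₀ := by linarith
    have hLt : L ≤ φ s₀ (c + (A₀ - c)/4) := csInf_le hbdd ⟨_, htc, rfl⟩
    have hcan : ε * e / d * d = ε * e := div_mul_cancel₀ _ (ne_of_gt hdpos)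
    refine key s₀ s₁ hs₁ c (c + (A₀ - c)/4) A₀ htc (by linarith) htA.le ?_
    have k1 : (φ s₀ A₀ - φ s₀ (c + (A₀ - c)/4)) * d < (ε * e / d) * d :=
      mul_lt_mul_of_pos_right (by linarith) hdpos
    have k2 : ε * e ≤ (φ s₀ (c + (A₀ - c)/4) - φ s₀ c) * e :=
      mul_le_mul_of_nonneg_right (by linarith) hepos.le
    linarith
  · by_cases hB : ∃ ε > 0, ∀ B < c, φ s₀ B ≤ φ s₀ c - ε
    · exfalso
      obtain ⟨ε, hε, hAll⟩ := hB
      push_neg at hA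
      have hεed : 0 < ε * e / d := by positivity
      obtain ⟨A₀, hA₀c, hφA⟩ := hA (ε * e / d) hεed
      have hB₀c : c - (A₀ - c)/2 < c := by linarith
      have hφB : φ s₀ (c - (A₀ - c)/2) ≤ φ s₀ c - ε := hAll _ hB₀c
      have hcan : ε * e / d * d = ε * e := div_mul_cancel₀ _ (ne_of_gt hdpos)
      refine key s₀ s₁ hs₁ (c - (A₀ - c)/2) c A₀ hB₀c (by linarith) hA₀c.le ?_
      have k1 : (φ s₀ A₀ - φ s₀ c) * d < (ε * e / d) * d :=
        mul_lt_mul_of_pos_right (by linarith) hdpos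
      have k2 : ε * e ≤ (φ s₀ c - φ s₀ (c - (A₀ - c)/2)) * e :=
        mul_le_mul_of_nonneg_right (by linarith) hepos.le
      linarith
    · push_neg at hA hB
      exact cont_of_limits _ (hmono s₀) c hA hB

theorem stmt10 {S : Type} [Fintype S] (hS : 2 ≤ Fintype.card S)
    (φ : S → ℝ → ℝ)
    (h : (∀ (X : Type) [Fintype X] [Nonempty X] (U : X → S → ℝ),
            NSD (Set.univ : Set S) (fun x s => φ s (U x s)) ⊆ NSD Set.univ U) ∨
         (∀ (X : Type) [Fintype X] [Nonempty X] (U : X → S → ℝ),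
            NWD (Set.univ : Set S) (fun x s => φ s (U x s)) ⊆ NWD Set.univ U)) :
    ∀ s, StrictMono (φ s) ∧ Continuous (φ s) := by
  have hyp : Hyp φ := h
  have hmono := strictmono_of_hyp φ hyp
  have hcont := cont_of_key hS φ hmono
    (fun s₀ s₁ hne B₀ t A₀ h1 h2 h3 h4 => key φ hyp hmono s₀ s₁ hne B₀ t A₀ h1 h2 h3 h4)
  exact fun s => ⟨hmono s, hcont s⟩
end

section
/- Let S be a finite set with |S| ≥ 2, let φ_s : ℝ → ℝ for each s ∈ S, and let Φ(u)_s = φ_s(u_s). Suppose NSD(X,S,U) ⊆ NSD(X,S,Φ∘U) for every nonempty finite X and every U : X × S → ℝ. Then either (i) each φ_s is concave and weakly increasing, or (ii) some φ_s is constant. -/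
open Finset

/-!
For each `s` pick `c s`, `d s` with `φ s (c s) < φ s (d s)`; they fill the states not under
study. If `φ s₀ b < φ s₀ a` for some `a ≤ b`, the action paying `b` in `s₀` is a best response to
the belief concentrated on `s₀`, yet after transformation it is dominated by the action paying
`a`. If `φ s₀` fails concavity at `a * L + (1 - a) * H`, a second state `s₁` makes the action
paying this point a best response to a belief on `{s₀, s₁}`, while after transformation it is
dominated by a mixture of the `L`- and `H`-actions with weight `t` slightly above `a`. In `s₁`
this needs `u < w` with `φ (a * w + (1 - a) * u) < t * φ w + (1 - t) * φ u`. Otherwise iterating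
the reverse inequality gives `tⁿ * (φ (x + d) - φ x) ≤ φ (x + aⁿ * d) - φ x`, so the difference
quotients of `φ` at `x` grow like `(t / a)ⁿ`, which is impossible at a point where the monotone
function `φ` is differentiable (Lebesgue).
-/
open Filter Topology

theorem pow_mul_sub_le_sub_of_mul_sub_le {φ : ℝ → ℝ} {a t : ℝ} (ht : 0 ≤ t)
    (h : ∀ u d, 0 < d → t * (φ (u + d) - φ u) ≤ φ (u + a * d) - φ u) (ha : 0 < a)
    (n : ℕ) (u : ℝ) {d : ℝ} (hd : 0 < d) :
    t ^ n * (φ (u + d) - φ u) ≤ φ (u + a ^ n * d) - φ u := by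
  induction n with
  | zero => simp
  | succ n ih =>
    calc t ^ (n + 1) * (φ (u + d) - φ u) = t * (t ^ n * (φ (u + d) - φ u)) := by ring
      _ ≤ t * (φ (u + a ^ n * d) - φ u) := mul_le_mul_of_nonneg_left ih ht
      _ ≤ φ (u + a * (a ^ n * d)) - φ u := h u _ (by positivity)
      _ = φ (u + a ^ (n + 1) * d) - φ u := by ring_nf

theorem Monotone.exists_differentiableAt_lt {φ : ℝ → ℝ} (hφ : Monotone φ) (p : ℝ) :
    ∃ x < p, DifferentiableAt ℝ φ x :=
  MeasureTheory.Measure.exists_mem_of_measure_ne_zero_of_ae (s := Set.Iio p) (by simp)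
    (MeasureTheory.ae_restrict_of_ae hφ.ae_differentiableAt)

theorem Monotone.exists_apply_mix_lt_of_lt {φ : ℝ → ℝ} (hφ : Monotone φ) {p q : ℝ}
    (hpq : φ p < φ q) {a t : ℝ} (ha : 0 < a) (ha1 : a < 1) (hat : a < t) :
    ∃ u w, u < w ∧ φ (a * w + (1 - a) * u) < t * φ w + (1 - t) * φ u := by
  by_contra! hC
  have hstep : ∀ u d, 0 < d → t * (φ (u + d) - φ u) ≤ φ (u + a * d) - φ u := fun u d hd => by
    have := hC u (u + d) (by linarith)
    rw [show a * (u + d) + (1 - a) * u = u + a * d by ring] at this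
    linarith
  obtain ⟨x, hxp, hx⟩ := hφ.exists_differentiableAt_lt p
  have hxq : x < q := hxp.trans (hφ.reflect_lt hpq)
  have hD : 0 < φ q - φ x := by linarith [hφ hxp.le]
  set d := q - x
  have hd : 0 < d := by linarith
  have hslope_lim : Tendsto (fun n : ℕ => slope φ x (x + a ^ n * d)) atTop (𝓝 (deriv φ x)) := by
    refine (hasDerivAt_iff_tendsto_slope.1 hx.hasDerivAt).comp (tendsto_nhdsWithin_iff.2 ⟨?_, ?_⟩)
    · simpa using tendsto_const_nhds.add
        ((tendsto_pow_atTop_nhds_zero_of_lt_one ha.le ha1).mul_const d)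
    · exact Eventually.of_forall fun n => by simp [(pow_pos ha n).ne', hd.ne']
  have hslope_ge : ∀ n : ℕ, (t / a) ^ n * ((φ q - φ x) / d) ≤ slope φ x (x + a ^ n * d) := by
    intro n
    have hiter := pow_mul_sub_le_sub_of_mul_sub_le (ha.trans hat).le hstep ha n x hd
    rw [add_sub_cancel x q] at hiter
    rw [slope_def_field, add_sub_cancel_left, div_pow, div_mul_div_comm]
    exact div_le_div_of_nonneg_right hiter (by positivity)
  have hslope_top : Tendsto (fun n : ℕ => slope φ x (x + a ^ n * d)) atTop atTop :=
    tendsto_atTop_mono hslope_ge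
      ((tendsto_pow_atTop_atTop_of_one_lt ((one_lt_div ha).2 hat)).atTop_mul_const (by positivity))
  exact not_tendsto_nhds_of_tendsto_atTop hslope_top _ hslope_lim

def PreservesNSD {S : Type} (φ : S → ℝ → ℝ) : Prop :=
  ∀ (X : Type) [Fintype X] [Nonempty X] (U : X → S → ℝ),
    NSD (Set.univ : Set S) U ⊆ NSD Set.univ (fun x s => φ s (U x s))

theorem mem_NSD_univ_of_best_response {X S : Type} [Fintype X] [Fintype S] {U : X → S → ℝ}
    {x : X} {μ : S → ℝ} (hμ : ∀ s, 0 ≤ μ s) {s₀ : S} (hs₀ : 0 < μ s₀)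
    (hx : ∀ y, ∑ s, μ s * U y s ≤ ∑ s, μ s * U x s) : x ∈ NSD Set.univ U := by
  rintro ⟨p, ⟨hp0, hp1⟩, hdom⟩
  have hswap : ∑ s, μ s * ∑ y, U y s * p y = ∑ y, p y * ∑ s, μ s * U y s := by
    simp only [Finset.mul_sum]
    rw [Finset.sum_comm]
    exact Finset.sum_congr rfl fun _ _ => Finset.sum_congr rfl fun _ _ => by ring
  have key : ∑ s, μ s * U x s < ∑ s, μ s * U x s := calc
      (∑ s, μ s * U x s) < ∑ s, μ s * ∑ y, U y s * p y :=
        Finset.sum_lt_sum (fun s _ => mul_le_mul_of_nonneg_left (hdom s trivial).le (hμ s))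
          ⟨s₀, Finset.mem_univ _, mul_lt_mul_of_pos_left (hdom s₀ trivial) hs₀⟩
    _ = ∑ y, p y * ∑ s, μ s * U y s := hswap
    _ ≤ ∑ y, p y * ∑ s, μ s * U x s :=
        Finset.sum_le_sum fun y _ => mul_le_mul_of_nonneg_left (hx y) (hp0 y)
    _ = ∑ s, μ s * U x s := by rw [← Finset.sum_mul, hp1, one_mul]
  exact key.false

theorem notMem_NSD_of_lt_mix {X S : Type} [Fintype X] [DecidableEq X] {S' : Set S}
    {U : X → S → ℝ} {x y z : X} {t : ℝ} (ht0 : 0 ≤ t) (ht1 : t ≤ 1)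
    (h : ∀ s ∈ S', U x s < t * U y s + (1 - t) * U z s) : x ∉ NSD S' U := by
  refine not_not.2 ⟨fun w => t * (if w = y then 1 else 0) + (1 - t) * (if w = z then 1 else 0),
    ⟨fun w => by positivity, ?_⟩, fun s hs => ?_⟩
  · simp [Finset.sum_add_distrib]
  · simpa [mul_add, Finset.sum_add_distrib, mul_comm _ t, mul_comm _ (1 - t)] using h s hs

theorem monotone_of_preservesNSD {S : Type} [Fintype S] [DecidableEq S] {φ : S → ℝ → ℝ}
    (h : PreservesNSD φ) {c d : S → ℝ} (hcd : ∀ s, φ s (c s) < φ s (d s)) (s₀ : S) :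
    Monotone (φ s₀) := by
  intro a b hab
  by_contra! hba
  let U : Fin 2 → S → ℝ := fun i s => if s = s₀ then ![b, a] i else ![c s, d s] i
  have hU : (0 : Fin 2) ∈ NSD Set.univ U :=
    mem_NSD_univ_of_best_response (μ := fun s => if s = s₀ then 1 else 0)
      (fun s => by positivity) (s₀ := s₀) (by simp) fun y => by
        simp only [ite_mul, one_mul, zero_mul, Finset.sum_ite_eq', Finset.mem_univ, if_true]
        fin_cases y <;> simp [U, hab]
  refine notMem_NSD_of_lt_mix (y := 1) (z := 1) zero_le_one le_rfl (fun s _ => ?_) (h _ U hU)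
  by_cases hs : s = s₀
  · subst hs; simpa [U] using hba
  · simpa [U, hs] using hcd s

theorem concaveOn_of_preservesNSD {S : Type} [Fintype S] [DecidableEq S] {φ : S → ℝ → ℝ}
    (h : PreservesNSD φ) (hmono : ∀ s, Monotone (φ s)) {c d : S → ℝ}
    (hcd : ∀ s, φ s (c s) < φ s (d s)) {s₀ s₁ : S} (hne : s₀ ≠ s₁) :
    ConcaveOn ℝ Set.univ (φ s₀) := by
  refine LinearOrder.concaveOn_of_lt convex_univ fun L _ H _ hLH a b ha hb hab => ?_
  by_contra! hlt
  obtain rfl : b = 1 - a := by linarith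
  simp only [smul_eq_mul] at hlt
  obtain ⟨t, hs₀, hat, ht1⟩ : ∃ t, φ s₀ (a * L + (1 - a) * H) < t * φ s₀ L + (1 - t) * φ s₀ H ∧
      t ∈ Set.Ioo a 1 := by
    have hcont : ContinuousAt (fun t => t * φ s₀ L + (1 - t) * φ s₀ H) a := by fun_prop
    exact (((continuousAt_const.eventually_lt hcont hlt).filter_mono nhdsWithin_le_nhds).and
      (Ioo_mem_nhdsGT (by linarith : a < 1))).exists
  obtain ⟨u, w, huw, hs₁⟩ := (hmono s₁).exists_apply_mix_lt_of_lt (hcd s₁) ha (by linarith) hat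
  let U : Fin 3 → S → ℝ := fun i s =>
    if s = s₀ then ![a * L + (1 - a) * H, L, H] i
    else if s = s₁ then ![a * w + (1 - a) * u, w, u] i
    else ![c s, d s, d s] i
  -- with these weights all three actions have the same expected utility `w * H - u * L`
  let μ : S → ℝ := fun s => if s = s₀ then w - u else if s = s₁ then H - L else 0
  have hμ : ∀ y, ∑ s, μ s * U y s = (w - u) * U y s₀ + (H - L) * U y s₁ := fun y => by
    rw [Fintype.sum_eq_add s₀ s₁ hne fun s hs => by simp [μ, hs.1, hs.2]]
    simp [μ, hne.symm]
  have hU : (0 : Fin 3) ∈ NSD Set.univ U :=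
    mem_NSD_univ_of_best_response (μ := μ) (fun s => by dsimp only [μ]; split_ifs <;> linarith)
      (s₀ := s₀) (by simpa [μ] using huw) fun y => by
        rw [hμ, hμ]
        fin_cases y <;> simp [U, hne.symm] <;> apply le_of_eq <;> ring
  refine notMem_NSD_of_lt_mix (y := 1) (z := 2) (by linarith) ht1.le (fun s _ => ?_) (h _ U hU)
  by_cases hs₀' : s = s₀
  · subst hs₀'; simpa [U] using hs₀
  by_cases hs₁' : s = s₁
  · subst hs₁'; simpa [U, hne.symm] using hs₁
  · simpa [U, hs₀', hs₁', ← add_mul] using hcd s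

theorem stmt11 {S : Type} [Fintype S] (hS : 2 ≤ Fintype.card S)
    (φ : S → ℝ → ℝ)
    (h : ∀ (X : Type) [Fintype X] [Nonempty X] (U : X → S → ℝ),
          NSD (Set.univ : Set S) U ⊆ NSD Set.univ (fun x s => φ s (U x s))) :
    (∀ s, ConcaveOn ℝ Set.univ (φ s) ∧ Monotone (φ s)) ∨
    (∃ s, ∀ a b : ℝ, φ s a = φ s b) := by
  classical
  refine or_iff_not_imp_right.2 fun hconst => ?_
  have hinc : ∀ s, ∃ c d, φ s c < φ s d := fun s => by
    by_contra! hle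
    exact hconst ⟨s, fun a b => (hle b a).antisymm (hle a b)⟩
  choose c d hcd using hinc
  have hmono : ∀ s, Monotone (φ s) := monotone_of_preservesNSD h hcd
  refine fun s₀ => ⟨?_, hmono s₀⟩
  obtain ⟨s₁, hs₁⟩ := Fintype.exists_ne_of_one_lt_card hS s₀
  exact concaveOn_of_preservesNSD h hmono hcd hs₁.symm
end

section
/- Let S be a finite set with |S| ≥ 2, let φ_s : ℝ → ℝ for each s ∈ S, and let Φ(u)_s = φ_s(u_s). Suppose NWD(X,S,U) ⊆ NWD(X,S,Φ∘U) for every nonempty finite X and every U : X × S → ℝ. Then either (i) each φ_s is concave and strictly increasing, or (ii) every φ_s is constant. -/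
open Finset

/-! If row `x` is the unique best row in some state, no mixture weakly dominates it,
so by hypothesis no mixture dominates it after `Φ` either. Two-row games of this kind show that
every `φ s` is monotone, and that if some `φ t` is not injective then every other `φ u` is
constant (hence all are, since `|S| ≥ 2`). If all `φ s` are strictly increasing, a failure of
midpoint concavity of `φ t` is played against a second state `u` in a three-row game whose first
row is the midpoint of the other two: this row is undominated, but a slightly unbalanced mixture
of the other two rows dominates it after `Φ`. Midpoint concavity plus monotonicity then gives
concavity by dyadic approximation. -/

/-- If this failed for all `c` and `k > 0`, the increments of `ψ` along a grid of mesh `1 / n` shrink by the factor `ρ` at each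
step to the right, so that `ρ ^ n * (ψ 2 - ψ 1) ≤ ψ 1 - ψ 0` for every `n`. -/
theorem exists_sub_le_mul_sub {ψ : ℝ → ℝ} (hψ : ψ 1 < ψ 2) {ρ : ℝ} (hρ : 1 < ρ) :
    ∃ c k : ℝ, 0 < k ∧ ψ c - ψ (c - k) ≤ ρ * (ψ (c + k) - ψ c) := by
  by_contra! hcon
  obtain ⟨N, hN⟩ := pow_unbounded_of_one_lt ((ψ 1 - ψ 0) / (ψ 2 - ψ 1)) hρ
  set n := N + 1
  have hn : (0 : ℝ) < n := by positivity
  set e : ℕ → ℝ := fun j => ψ ((j + 1) / n) - ψ (j / n)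
  have hstep : ∀ j, ρ * e (j + 1) < e j := by
    intro j
    have := hcon ((j + 1) / n) (1 / n) (by positivity)
    rw [show ((j : ℝ) + 1) / n + 1 / n = (j + 1 + 1) / n by ring,
      show ((j : ℝ) + 1) / n - 1 / n = j / n by ring] at this
    simpa only [e, Nat.cast_add, Nat.cast_one] using this
  have hgeom : ∀ j k, ρ ^ k * e (j + k) ≤ e j := by
    intro j k
    induction k with
    | zero => simp
    | succ k ih =>
      calc ρ ^ (k + 1) * e (j + (k + 1)) = ρ ^ k * (ρ * e (j + k + 1)) := by ring_nf
        _ ≤ ρ ^ k * e (j + k) := by gcongr; exact (hstep _).le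
        _ ≤ e j := ih
  have htel : ∀ m, ∑ j ∈ range n, e (m + j) = ψ ((m + n) / n) - ψ (m / n) := by
    intro m
    have := sum_range_sub (fun j : ℕ => ψ (((m + j : ℕ) : ℝ) / n)) n
    push_cast [add_zero] at this
    rw [← this]
    refine sum_congr rfl fun j _ => ?_
    simp only [e]
    push_cast
    ring_nf
  have hsum : ρ ^ n * (ψ 2 - ψ 1) ≤ ψ 1 - ψ 0 := by
    have h₁ := htel n
    have h₂ := htel 0
    rw [show ((n : ℝ) + n) / n = 2 by field_simp; ring, div_self hn.ne'] at h₁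
    simp only [zero_add, CharP.cast_eq_zero, zero_div, div_self hn.ne'] at h₂
    rw [← h₁, ← h₂, mul_sum]
    exact sum_le_sum fun j _ => (hgeom j n).trans_eq' (by rw [add_comm])
  have hρn : ρ ^ N ≤ ρ ^ n := pow_le_pow_right₀ hρ.le (Nat.le_succ N)
  rw [div_lt_iff₀ (by linarith)] at hN
  nlinarith

def IsConcaveWeight (φ : ℝ → ℝ) (w : ℝ) : Prop :=
  ∀ x y, w * φ x + (1 - w) * φ y ≤ φ (w * x + (1 - w) * y)

theorem IsConcaveWeight.midpoint {φ : ℝ → ℝ}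
    (hmid : ∀ x y, (φ x + φ y) / 2 ≤ φ ((x + y) / 2)) {w₁ w₂ : ℝ}
    (h₁ : IsConcaveWeight φ w₁) (h₂ : IsConcaveWeight φ w₂) :
    IsConcaveWeight φ ((w₁ + w₂) / 2) := by
  intro x y
  calc (w₁ + w₂) / 2 * φ x + (1 - (w₁ + w₂) / 2) * φ y
      = ((w₁ * φ x + (1 - w₁) * φ y) + (w₂ * φ x + (1 - w₂) * φ y)) / 2 := by ring
    _ ≤ (φ (w₁ * x + (1 - w₁) * y) + φ (w₂ * x + (1 - w₂) * y)) / 2 := by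
      gcongr
      exacts [h₁ x y, h₂ x y]
    _ ≤ φ (((w₁ * x + (1 - w₁) * y) + (w₂ * x + (1 - w₂) * y)) / 2) := hmid _ _
    _ = φ ((w₁ + w₂) / 2 * x + (1 - (w₁ + w₂) / 2) * y) := by ring_nf

theorem isConcaveWeight_dyadic {φ : ℝ → ℝ}
    (hmid : ∀ x y, (φ x + φ y) / 2 ≤ φ ((x + y) / 2)) (n : ℕ) :
    ∀ k : ℕ, k ≤ 2 ^ n → IsConcaveWeight φ (k / 2 ^ n) := by
  induction n with
  | zero =>
    intro k hk x y
    interval_cases k <;> simp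
  | succ n ih =>
    intro k hk
    rw [pow_succ] at hk
    have hi : k / 2 ≤ 2 ^ n := by omega
    have hj : k - k / 2 ≤ 2 ^ n := by omega
    convert (ih _ hi).midpoint hmid (ih _ hj) using 1
    rw [Nat.cast_sub (Nat.div_le_self k 2), pow_succ]
    ring

theorem concaveOn_univ_of_monotone_of_midpoint {φ : ℝ → ℝ} (hm : Monotone φ)
    (hmid : ∀ x y, x < y → (φ x + φ y) / 2 ≤ φ ((x + y) / 2)) :
    ConcaveOn ℝ Set.univ φ := by
  have hmid' : ∀ x y, (φ x + φ y) / 2 ≤ φ ((x + y) / 2) := by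
    intro x y
    rcases lt_trichotomy x y with hxy | rfl | hxy
    · exact hmid x y hxy
    · simp
    · simpa only [add_comm] using hmid y x hxy
  refine LinearOrder.concaveOn_of_lt convex_univ fun x _ y _ hxy a b ha hb hab => ?_
  obtain rfl : b = 1 - a := by linarith
  simp only [smul_eq_mul]
  refine le_of_forall_pos_le_add fun ε hε => ?_
  obtain ⟨n, hn⟩ := pow_unbounded_of_one_lt ((φ y - φ x) / ε) one_lt_two
  have h2n : (0 : ℝ) < 2 ^ n := by positivity
  set k := ⌈a * 2 ^ n⌉₊
  have hk₁ : a * 2 ^ n ≤ k := Nat.le_ceil _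
  have hk₂ : (k : ℝ) < a * 2 ^ n + 1 := Nat.ceil_lt_add_one (by positivity)
  have hk : k ≤ 2 ^ n := Nat.ceil_le.2 (by push_cast; nlinarith)
  set q : ℝ := k / 2 ^ n
  have hqa : a ≤ q := by rw [le_div_iff₀ h2n]; exact hk₁
  have hqa' : (q - a) * 2 ^ n < 1 := by
    rw [sub_mul, div_mul_cancel₀ _ h2n.ne']; linarith
  have hφ : φ x ≤ φ y := hm hxy.le
  have hdy := isConcaveWeight_dyadic hmid' n k hk x y
  have hmono : φ (q * x + (1 - q) * y) ≤ φ (a * x + (1 - a) * y) := hm (by nlinarith)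
  rw [div_lt_iff₀ hε] at hn
  nlinarith

theorem notMem_NWD_of_lt {X S : Type} [Fintype X] {U : X → S → ℝ} {x : X} {p : X → ℝ}
    (hp : IsDist p) (hlt : U x < fun s => ∑ y, U y s * p y) : x ∉ NWD Set.univ U := by
  obtain ⟨hle, s, hs⟩ := Pi.lt_def.1 hlt
  exact fun hx => hx ⟨p, hp, fun s _ => hle s, s, Set.mem_univ s, hs⟩

section Games

variable {S : Type}

theorem mem_NWD_pair {v w : S → ℝ} {t : S} (hwv : w t < v t) :
    (0 : Fin 2) ∈ NWD Set.univ ![v, w] := by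
  rintro ⟨p, ⟨hp, hp1⟩, hge, s, -, hgt⟩
  rw [Fin.sum_univ_two] at hp1
  have hsum : ∀ s, ∑ y, ![v, w] y s * p y = v s + p 1 * (w s - v s) := by
    intro s
    simp only [Fin.sum_univ_two, Matrix.cons_val_zero, Matrix.cons_val_one]
    linear_combination v s * hp1
  have hge_t := hge t trivial
  rw [hsum, Matrix.cons_val_zero] at hge_t
  have hp1 : p 1 = 0 := by nlinarith [hp 1]
  rw [hsum, Matrix.cons_val_zero, hp1] at hgt
  linarith

theorem mem_NWD_midpoint {v w : S → ℝ} {t u : S} (ht : v t < w t) (hu : w u < v u) :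
    (0 : Fin 3) ∈ NWD Set.univ ![fun s => (v s + w s) / 2, v, w] := by
  rintro ⟨p, ⟨-, hp1⟩, hge, s, -, hgt⟩
  rw [Fin.sum_univ_three] at hp1
  have hsum : ∀ s, ∑ y, ![fun s => (v s + w s) / 2, v, w] y s * p y
      = (v s + w s) / 2 + (p 1 - p 2) / 2 * (v s - w s) := by
    intro s
    simp only [Fin.sum_univ_three, Matrix.cons_val_zero, Matrix.cons_val_one,
      Matrix.cons_val_two, Matrix.tail_cons, Matrix.head_cons]
    linear_combination (v s + w s) / 2 * hp1
  have hge_t := hge t trivial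
  have hge_u := hge u trivial
  rw [hsum, Matrix.cons_val_zero] at hge_t hge_u
  have hp12 : p 1 = p 2 := by
    apply le_antisymm <;> by_contra! hlt
    · nlinarith
    · nlinarith
  rw [hsum, Matrix.cons_val_zero, hp12] at hgt
  linarith

end Games

def PreservesNWD {S : Type} (φ : S → ℝ → ℝ) : Prop :=
  ∀ (X : Type) [Fintype X] [Nonempty X] (U : X → S → ℝ),
    NWD (Set.univ : Set S) U ⊆ NWD Set.univ (fun x s => φ s (U x s))

namespace PreservesNWD

variable {S : Type} {φ : S → ℝ → ℝ}

theorem not_lt (h : PreservesNWD φ) {v w : S → ℝ} {t : S} (hwv : w t < v t) :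
    ¬ (fun s => φ s (v s)) < fun s => φ s (w s) := by
  intro hlt
  have hp : IsDist ![0, 1] := ⟨fun i => by fin_cases i <;> norm_num, by simp [Fin.sum_univ_two]⟩
  refine notMem_NWD_of_lt hp ?_ (h (Fin 2) ![v, w] (mem_NWD_pair hwv))
  simpa [Fin.sum_univ_two] using hlt

theorem not_lt_mix (h : PreservesNWD φ) {v w : S → ℝ} {t u : S} (ht : v t < w t)
    (hu : w u < v u) {q : ℝ} (hq₀ : 0 ≤ q) (hq₁ : q ≤ 1) :
    ¬ (fun s => φ s ((v s + w s) / 2)) < fun s => q * φ s (v s) + (1 - q) * φ s (w s) := by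
  intro hlt
  have hp : IsDist ![0, q, 1 - q] :=
    ⟨fun i => by fin_cases i <;> simp [hq₀, hq₁], by simp [Fin.sum_univ_three]⟩
  refine notMem_NWD_of_lt hp ?_ (h (Fin 3) _ (mem_NWD_midpoint ht hu))
  convert hlt using 2 with s
  · rfl
  · rw [Fin.sum_univ_three]
    simp
    ring

theorem monotone (h : PreservesNWD φ) (t : S) : Monotone (φ t) := by
  classical
  intro a b hab
  by_contra! hlt
  refine h.not_lt (v := fun s => if s = t then b else 0) (w := fun s => if s = t then a else 0)
    (t := t) (by simpa using hab.lt_of_ne (by rintro rfl; exact hlt.false)) ?_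
  refine Pi.lt_def.2 ⟨fun s => ?_, t, by simpa using hlt⟩
  by_cases hs : s = t <;> simp [hs, hlt.le]

theorem const_of_eq_of_lt (h : PreservesNWD φ) {t u : S} (hut : u ≠ t) {a b : ℝ}
    (hab : a < b) (heq : φ t a = φ t b) (c d : ℝ) : φ u c = φ u d := by
  classical
  have hle : ∀ c d, φ u d ≤ φ u c := by
    intro c d
    by_contra! hlt
    refine h.not_lt (v := fun s => if s = t then b else if s = u then c else 0)
      (w := fun s => if s = t then a else if s = u then d else 0) (t := t) (by simpa using hab) ?_
    refine Pi.lt_def.2 ⟨fun s => ?_, u, by simpa [hut] using hlt⟩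
    by_cases hst : s = t
    · simp [hst, heq]
    · by_cases hsu : s = u <;> simp [hst, hsu, hut, hlt.le]
  exact le_antisymm (hle d c) (hle c d)

theorem const_of_eq [Nontrivial S] (h : PreservesNWD φ) {t : S} {a b : ℝ} (hab : a ≠ b)
    (heq : φ t a = φ t b) (s : S) (c d : ℝ) : φ s c = φ s d := by
  have hother : ∀ s ≠ t, ∀ c d, φ s c = φ s d := by
    rcases hab.lt_or_gt with hab | hab
    · exact fun s hst => h.const_of_eq_of_lt hst hab heq
    · exact fun s hst => h.const_of_eq_of_lt hst hab heq.symm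
  obtain ⟨u, hut⟩ := exists_ne t
  by_cases hsu : s = u
  · exact hsu ▸ hother u hut c d
  · exact h.const_of_eq_of_lt hsu zero_lt_one (hother u hut 0 1) c d

open Filter Topology in
theorem midpoint_concave (h : PreservesNWD φ)
    {t u : S} (hut : u ≠ t) (hu : φ u 1 < φ u 2) {a b : ℝ} (hab : a < b) :
    (φ t a + φ t b) / 2 ≤ φ t ((a + b) / 2) := by
  classical
  by_contra! hlt
  have hlim : Tendsto (fun σ : ℝ => (1 / 2 + σ) * φ t a + (1 / 2 - σ) * φ t b) (𝓝 0)
      (𝓝 ((φ t a + φ t b) / 2)) := by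
    convert (show Continuous fun σ : ℝ => (1 / 2 + σ) * φ t a + (1 / 2 - σ) * φ t b by
      fun_prop).tendsto 0 using 2
    ring
  have hsmall : ∀ᶠ σ in 𝓝[>] (0 : ℝ), σ ∈ Set.Ioo 0 (1 / 2) := Ioo_mem_nhdsGT (by norm_num)
  obtain ⟨σ, ⟨hσ₀, hσ₁⟩, hσ⟩ :=
    (hsmall.and ((hlim.mono_left nhdsWithin_le_nhds).eventually (lt_mem_nhds hlt))).exists
  set ρ := (1 / 2 + σ) / (1 / 2 - σ)
  have hρ : 1 < ρ := by rw [one_lt_div] <;> linarith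
  obtain ⟨c, k, hk, hck⟩ := exists_sub_le_mul_sub hu hρ
  have hu_mix : φ u c ≤ (1 / 2 + σ) * φ u (c + k) + (1 - (1 / 2 + σ)) * φ u (c - k) := by
    have h₁ := mul_le_mul_of_nonneg_left hck (by linarith : (0 : ℝ) ≤ 1 / 2 - σ)
    rw [← mul_assoc, mul_div_cancel₀ _ (by linarith)] at h₁
    linarith
  -- The `σ`-unbalanced mixture of the rows `(a, c + k)` and `(b, c - k)` (states `t`, `u`)
  -- beats their midpoint after `Φ`: strictly in `t` by `hσ`, weakly in `u` by `hu_mix`.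
  refine h.not_lt_mix (v := fun s => if s = t then a else if s = u then c + k else 0)
    (w := fun s => if s = t then b else if s = u then c - k else 0) (t := t) (u := u)
    (by simpa using hab) (by simp [hut]; linarith) (q := 1 / 2 + σ) (by linarith) (by linarith) ?_
  refine Pi.lt_def.2 ⟨fun s => ?_, t, ?_⟩
  · by_cases hst : s = t
    · subst hst; simp; linarith
    · by_cases hsu : s = u
      · subst hsu; simpa [hst] using hu_mix
      · simp [hst, hsu]; linarith
  · simp; linarith

end PreservesNWD

theorem stmt12 {S : Type} [Fintype S] (hS : 2 ≤ Fintype.card S)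
    (φ : S → ℝ → ℝ)
    (h : ∀ (X : Type) [Fintype X] [Nonempty X] (U : X → S → ℝ),
          NWD (Set.univ : Set S) U ⊆ NWD Set.univ (fun x s => φ s (U x s))) :
    (∀ s, ConcaveOn ℝ Set.univ (φ s) ∧ StrictMono (φ s)) ∨
    (∀ s, ∀ a b : ℝ, φ s a = φ s b) := by
  have hφ : PreservesNWD φ := h
  have : Nontrivial S := Fintype.one_lt_card_iff_nontrivial.1 hS
  by_cases hinj : ∀ s, Function.Injective (φ s)
  · left
    have hsm : ∀ s, StrictMono (φ s) := fun s =>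
      (hφ.monotone s).strictMono_of_injective (hinj s)
    intro s
    obtain ⟨u, hus⟩ := exists_ne s
    exact ⟨concaveOn_univ_of_monotone_of_midpoint (hsm s).monotone fun _ _ hxy =>
      hφ.midpoint_concave hus (hsm u one_lt_two) hxy, hsm s⟩
  · right
    simp only [Function.Injective, not_forall] at hinj
    obtain ⟨t, a, b, heq, hab⟩ := hinj
    exact hφ.const_of_eq hab heq
end

section
/- Let S be a finite set with |S| ≥ 2 and fix weakly increasing functions φ_s : ℝ → ℝ for each s ∈ S, with Φ(u)_s = φ_s(u_s). Define NSDhat(X,S',U) as the set of x ∈ X such that there is no y ∈ X with U(y,s) > U(x,s) for every s ∈ S'. Then NSDhat(X,S',U) ⊆ NSDhat(X,S',Φ∘U) for every finite problem (X,S',U). Conversely, if a transformation Φ : ℝ^S → ℝ^S satisfies this containment for all finite problems, then Φ is situation-wise with each φ_s weakly increasing. -/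
open Finset

theorem stmt14 {S : Type} [Fintype S] (hS : 2 ≤ Fintype.card S)
    (Φ : (S → ℝ) → (S → ℝ)) :
    ((∃ φ : S → ℝ → ℝ, (∀ s, Monotone (φ s)) ∧ ∀ (u : S → ℝ) (s : S), Φ u s = φ s (u s)) ↔
      (∀ (X : Type) [Fintype X] [Nonempty X] (S' : Set S), S'.Nonempty →
        ∀ U : X → S → ℝ,
          NSDhat S' U ⊆ NSDhat S' (fun x => Φ (U x)))) := by
  constructor
  · rintro ⟨φ, hmono, hφ⟩ X _ _ S' hS' U x hx
    simp only [NSDhat, Set.mem_setOf_eq] at hx ⊢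
    rintro ⟨y, hy⟩
    refine hx ⟨y, fun s hs => ?_⟩
    by_contra hcon
    push_neg at hcon
    have := hy s hs
    rw [hφ, hφ] at this
    exact absurd this (not_lt.2 (hmono s hcon))
  · intro h
    have key : ∀ (u v : S → ℝ) (s : S), v s ≤ u s → Φ v s ≤ Φ u s := by
      intro u v s hle
      by_contra hlt
      push_neg at hlt
      have hx : (false : Bool) ∈ NSDhat {s} (fun b => if b then v else u) := by
        simp only [NSDhat, Set.mem_setOf_eq]
        rintro ⟨y, hy⟩
        have := hy s rfl
        cases y <;> simp at this <;> linarith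
      have h2 := h Bool {s} ⟨s, rfl⟩ (fun b => if b then v else u) hx
      simp only [NSDhat, Set.mem_setOf_eq] at h2
      refine h2 ⟨true, fun t ht => ?_⟩
      have : t = s := ht
      subst this
      simpa using hlt
    refine ⟨fun s t => Φ (fun _ => t) s, ?_, ?_⟩
    · intro s a b hab
      exact key (fun _ => b) (fun _ => a) s hab
    · intro u s
      have h1 := key u (fun _ => u s) s le_rfl
      have h2 := key (fun _ => u s) u s le_rfl
      linarith
end

section
/- Let S be a finite set with |S| ≥ 2 and let Φ : ℝ^S → ℝ^S. Define NWDhat(X,S',U) as the set of x ∈ X such that no y ∈ X satisfies U(y,s) ≥ U(x,s) for all s ∈ S' with strict inequality for some s ∈ S'. Then NWDhat(X,S',U) ⊆ NWDhat(X,S',Φ∘U) for every finite problem (X,S',U) if and only if Φ is situation-wise via functions φ_s : ℝ → ℝ and either (i) every φ_s is strictly increasing, or (ii) every φ_s is constant. -/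
open Finset

theorem stmt15 {S : Type} [Fintype S] (hS : 2 ≤ Fintype.card S)
    (Φ : (S → ℝ) → (S → ℝ)) :
    ((∀ (X : Type) [Fintype X] [Nonempty X] (S' : Set S), S'.Nonempty →
        ∀ U : X → S → ℝ,
          NWDhat S' U ⊆ NWDhat S' (fun x => Φ (U x))) ↔
      (∃ φ : S → ℝ → ℝ, (∀ (u : S → ℝ) (s : S), Φ u s = φ s (u s)) ∧
        ((∀ s, StrictMono (φ s)) ∨ (∀ s, ∀ a b : ℝ, φ s a = φ s b)))) := by
  classical
  constructor
  · intro H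
    set φ : S → ℝ → ℝ := fun s t => Φ (fun _ => t) s with hφdef
    -- key two-object lemma
    have key : ∀ (u v : S → ℝ) (S' : Set S), S'.Nonempty →
        ¬ ((∀ s ∈ S', v s ≥ u s) ∧ (∃ s ∈ S', v s > u s)) →
        ¬ ((∀ s ∈ S', Φ v s ≥ Φ u s) ∧ (∃ s ∈ S', Φ v s > Φ u s)) := by
      intro u v S' hS' h1
      have hU : (false : Bool) ∈ NWDhat S' (fun b => if b then v else u) := by
        rintro ⟨y, hy1, hy2⟩
        cases y
        · obtain ⟨s, hs, hlt⟩ := hy2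
          simp at hlt
        · refine h1 ⟨fun s hs => ?_, ?_⟩
          · simpa using hy1 s hs
          · obtain ⟨s, hs, hlt⟩ := hy2
            exact ⟨s, hs, by simpa using hlt⟩
      have h2 := H Bool S' hS' (fun b => if b then v else u) hU
      intro hcon
      refine h2 ⟨true, fun s hs => by simpa using hcon.1 s hs, ?_⟩
      obtain ⟨s, hs, hlt⟩ := hcon.2
      exact ⟨s, hs, by simpa using hlt⟩
    -- situation-wise
    have sw : ∀ (u : S → ℝ) (s : S), Φ u s = φ s (u s) := by
      intro u s
      have h1 := key u (fun _ => u s) {s} ⟨s, rfl⟩ (by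
        rintro ⟨-, t, ht, hlt⟩
        rw [Set.mem_singleton_iff] at ht
        subst ht
        exact lt_irrefl _ hlt)
      have h2 := key (fun _ => u s) u {s} ⟨s, rfl⟩ (by
        rintro ⟨-, t, ht, hlt⟩
        rw [Set.mem_singleton_iff] at ht
        subst ht
        exact lt_irrefl _ hlt)
      have hle1 : φ s (u s) ≤ Φ u s := by
        by_contra hlt
        push_neg at hlt
        exact h1 ⟨fun t ht => by rw [Set.mem_singleton_iff] at ht; subst ht; exact le_of_lt hlt,
          ⟨s, rfl, hlt⟩⟩
      have hle2 : Φ u s ≤ φ s (u s) := by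
        by_contra hlt
        push_neg at hlt
        exact h2 ⟨fun t ht => by rw [Set.mem_singleton_iff] at ht; subst ht; exact le_of_lt hlt,
          ⟨s, rfl, hlt⟩⟩
      exact le_antisymm hle2 hle1
    -- monotone
    have mono : ∀ s, Monotone (φ s) := by
      intro s t1 t2 h
      have h1 := key (fun _ => t2) (fun _ => t1) {s} ⟨s, rfl⟩ (by
        rintro ⟨-, t, ht, hlt⟩
        exact absurd (lt_of_le_of_lt h hlt) (lt_irrefl _))
      by_contra hlt
      push_neg at hlt
      exact h1 ⟨fun t ht => by rw [Set.mem_singleton_iff] at ht; subst ht; exact le_of_lt hlt,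
        ⟨s, rfl, hlt⟩⟩
    -- spreading constancy
    have claim : ∀ s s' : S, s' ≠ s → ∀ a b : ℝ, a < b → φ s a = φ s b →
        ∀ c d : ℝ, c < d → φ s' c = φ s' d := by
      intro s s' hne a b hab heq c d hcd
      set P : S → ℝ := fun t => if t = s then b else c with hP
      set Q : S → ℝ := fun t => if t = s then a else d with hQ
      have hmem_s : s ∈ ({s, s'} : Set S) := Or.inl rfl
      have hmem_s' : s' ∈ ({s, s'} : Set S) := Or.inr rfl
      have hQs : Q s = a := by simp [hQ]
      have hPs : P s = b := by simp [hP]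
      have hQs' : Q s' = d := by simp [hQ, hne]
      have hPs' : P s' = c := by simp [hP, hne]
      have h1 := key P Q ({s, s'} : Set S) ⟨s, hmem_s⟩ (by
        rintro ⟨hall, -⟩
        have := hall s hmem_s
        rw [hQs, hPs] at this
        exact absurd hab (not_lt.mpr this))
      have hΦQs : Φ Q s = φ s a := by rw [sw, hQs]
      have hΦPs : Φ P s = φ s b := by rw [sw, hPs]
      have hΦQs' : Φ Q s' = φ s' d := by rw [sw, hQs']
      have hΦPs' : Φ P s' = φ s' c := by rw [sw, hPs']
      have hle : φ s' c ≤ φ s' d := mono s' (le_of_lt hcd)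
      by_contra hnecd
      have hlt : φ s' c < φ s' d := lt_of_le_of_ne hle hnecd
      refine h1 ⟨?_, ⟨s', hmem_s', ?_⟩⟩
      · rintro t (ht | ht)
        · subst ht
          rw [hΦQs, hΦPs, heq]
        · rw [Set.mem_singleton_iff] at ht
          subst ht
          rw [hΦQs', hΦPs']
          exact le_of_lt hlt
      · rw [hΦQs', hΦPs']
        exact hlt
    by_cases hinj : ∀ s, Function.Injective (φ s)
    · exact ⟨φ, sw, Or.inl fun s => (mono s).strictMono_of_injective (hinj s)⟩
    · push_neg at hinj
      obtain ⟨s0, hs0⟩ := hinj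
      rw [Function.not_injective_iff] at hs0
      obtain ⟨a, b, heq, hne⟩ := hs0
      obtain ⟨s1, hs1⟩ := Fintype.exists_ne_of_one_lt_card (lt_of_lt_of_le one_lt_two hS) s0
      have con1 : ∀ c d : ℝ, c < d → φ s1 c = φ s1 d := by
        rcases hne.lt_or_gt with h | h
        · exact claim s0 s1 hs1 a b h heq
        · exact claim s0 s1 hs1 b a h heq.symm
      have conAll : ∀ t : S, ∀ c d : ℝ, c < d → φ t c = φ t d := by
        intro t c d hcd
        by_cases ht : t = s1
        · subst ht
          exact con1 c d hcd
        · exact claim s1 t ht 0 1 zero_lt_one (con1 0 1 zero_lt_one) c d hcd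
      refine ⟨φ, sw, Or.inr fun s a' b' => ?_⟩
      rcases lt_trichotomy a' b' with h | h | h
      · exact conAll s a' b' h
      · rw [h]
      · exact (conAll s b' a' h).symm
  · rintro ⟨φ, hφ, hcase⟩ X _ _ S' hS' U x hx hdom
    obtain ⟨y, hall, s, hsmem, hlt⟩ := hdom
    rcases hcase with hmono | hconst
    · refine hx ⟨y, fun t ht => ?_, ⟨s, hsmem, ?_⟩⟩
      · have h2 := hall t ht
        simp only [hφ] at h2
        exact (hmono t).le_iff_le.mp h2
      · simp only [hφ] at hlt
        exact (hmono s).lt_iff_lt.mp hlt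
    · simp only [hφ, hconst s (U y s) (U x s)] at hlt
      exact lt_irrefl _ hlt
end

section
/- Let S be a finite set with |S| ≥ 2 and let Φ : ℝ^S → ℝ^S. Then NSDhat(X,S',Φ∘U) ⊆ NSDhat(X,S',U) holds for every finite problem (X,S',U) if and only if for all u, v ∈ ℝ^S and s ∈ S, u_s > v_s implies Φ(u)_s > Φ(v)_s. -/
open Finset

theorem stmt16 {S : Type} [Fintype S] (hS : 2 ≤ Fintype.card S)
    (Φ : (S → ℝ) → (S → ℝ)) :
    ((∀ (X : Type) [Fintype X] [Nonempty X] (S' : Set S), S'.Nonempty →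
        ∀ U : X → S → ℝ,
          NSDhat S' (fun x => Φ (U x)) ⊆ NSDhat S' U) ↔
      (∀ (u v : S → ℝ) (s : S), u s > v s → Φ u s > Φ v s)) := by
  constructor
  · intro h u v s huv
    by_contra hle
    push_neg at hle
    have hx : (false : Bool) ∈ NSDhat {s} (fun b => Φ ((fun b : Bool => if b then u else v) b)) := by
      intro ⟨b, hb⟩
      have := hb s rfl
      cases b with
      | false => simp at this
      | true => simp at this; exact absurd this (not_lt_of_ge hle)
    have hx' := h Bool {s} ⟨s, rfl⟩ (fun b : Bool => if b then u else v) hx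
    exact hx' ⟨true, fun t ht => by rcases ht with rfl; simpa using huv⟩
  · intro h X _ _ S' hS' U x hx ⟨y, hy⟩
    exact hx ⟨y, fun t ht => h _ _ t (hy t ht)⟩
end

section
/- Let S be a finite set with |S| ≥ 2 and let Φ : ℝ^S → ℝ^S. Then NWDhat(X,S',Φ∘U) ⊆ NWDhat(X,S',U) holds for every finite problem (X,S',U) if and only if for all u, v ∈ ℝ^S and s ∈ S: (i) u_s > v_s implies Φ(u)_s > Φ(v)_s, and (ii) if u_s = v_s and Φ(u)_s > Φ(v)_s then u ≥ v coordinatewise with u ≠ v. -/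
open Finset

theorem stmt17 {S : Type} [Fintype S] (hS : 2 ≤ Fintype.card S)
    (Φ : (S → ℝ) → (S → ℝ)) :
    ((∀ (X : Type) [Fintype X] [Nonempty X] (S' : Set S), S'.Nonempty →
        ∀ U : X → S → ℝ,
          NWDhat S' (fun x => Φ (U x)) ⊆ NWDhat S' U) ↔
      (∀ (u v : S → ℝ) (s : S),
        (u s > v s → Φ u s > Φ v s) ∧
        (u s = v s → Φ u s > Φ v s → (∀ t, u t ≥ v t) ∧ u ≠ v))) := by
  constructor
  · intro h u v s
    constructor
    · intro hus
      by_contra hns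
      push_neg at hns
      have hx := h Bool {s} ⟨s, rfl⟩ (fun b => if b then u else v)
      have hmem : (false : Bool) ∈ NWDhat {s} (fun b => Φ (if b then u else v)) := by
        rintro ⟨y, hy1, t, ht, ht2⟩
        cases ht
        cases y
        · simp at ht2
        · simp only [if_true, if_false] at ht2
          exact absurd ht2 (not_lt.2 hns)
      have hfin := hx hmem
      apply hfin
      refine ⟨true, ?_, s, rfl, by simpa using hus⟩
      intro t ht
      cases ht
      simpa using hus.le
    · intro hsv hΦ
      have hne : u ≠ v := by
        rintro rfl; exact lt_irrefl _ hΦ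
      refine ⟨?_, hne⟩
      intro t
      by_contra hnt
      push_neg at hnt
      have hx := h Bool {s, t} ⟨s, Or.inl rfl⟩ (fun b => if b then u else v)
      have hmem : (true : Bool) ∈ NWDhat {s, t} (fun b => Φ (if b then u else v)) := by
        rintro ⟨y, hy1, r, hr, hr2⟩
        cases y
        · have := hy1 s (Or.inl rfl)
          simp only [if_true, if_false] at this
          exact absurd hΦ (not_lt.2 this)
        · simp at hr2
      have hfin := hx hmem
      apply hfin
      refine ⟨false, ?_, t, Or.inr rfl, by simpa using hnt⟩
      intro r hr
      rcases hr with hr | hr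
      · subst hr; simpa using hsv.le
      · subst hr; simpa using hnt.le
  · rintro hΦ X _ _ S' hS' U x hx ⟨y, hy1, s0, hs0, hs0'⟩
    apply hx
    refine ⟨y, ?_, s0, hs0, (hΦ (U y) (U x) s0).1 hs0'⟩
    intro s hs
    rcases lt_or_eq_of_le (hy1 s hs) with h1 | h1
    · exact ((hΦ (U y) (U x) s).1 h1).le
    · by_contra hc
      push_neg at hc
      have h2 := (hΦ (U x) (U y) s).2 h1 hc
      exact absurd hs0' (not_lt.2 (h2.1 s0))
end

section
/- Let S be a finite set with |S| ≥ 2 and let Φ : ℝ^S → ℝ^S be continuous. Suppose that for all u, v ∈ ℝ^S and s ∈ S, u_s > v_s implies Φ(u)_s > Φ(v)_s. Then Φ is situation-wise via strictly increasing functions: for each s ∈ S there exists a strictly increasing φ_s : ℝ → ℝ such that Φ(u)_s = φ_s(u_s) for all u ∈ ℝ^S. -/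
open Finset

theorem stmt18 {S : Type} [Fintype S] (hS : 2 ≤ Fintype.card S)
    (Φ : (S → ℝ) → (S → ℝ)) (hcont : Continuous Φ)
    (hmono : ∀ (u v : S → ℝ) (s : S), u s > v s → Φ u s > Φ v s) :
    ∀ s : S, ∃ φs : ℝ → ℝ, StrictMono φs ∧ ∀ u : S → ℝ, Φ u s = φs (u s) := by
  intro s
  classical
  have key : ∀ u v : S → ℝ, u s = v s → Φ u s ≤ Φ v s := by
    intro u v huv
    have hc : Filter.Tendsto (fun ε : ℝ => Φ (Function.update v s (v s + ε)) s)
        (nhdsWithin 0 (Set.Ioi 0)) (nhds (Φ v s)) := by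
      have hupd : Continuous (fun ε : ℝ => Function.update v s (v s + ε)) := by
        apply continuous_pi
        intro t
        simp only [Function.update_apply]
        by_cases h : t = s
        · simp [h]; exact continuous_const.add continuous_id
        · simp [h]; exact continuous_const
      have hcontf : Continuous (fun ε : ℝ => Φ (Function.update v s (v s + ε)) s) :=
        (continuous_apply s).comp (hcont.comp hupd)
      have h0 : Φ (Function.update v s (v s + 0)) s = Φ v s := by
        simp
      have := hcontf.continuousAt (x := (0:ℝ))
      rw [ContinuousAt, h0] at this
      exact this.mono_left nhdsWithin_le_nhds
    have hle : ∀ᶠ ε : ℝ in nhdsWithin 0 (Set.Ioi 0),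
        Φ u s ≤ Φ (Function.update v s (v s + ε)) s := by
      filter_upwards [self_mem_nhdsWithin] with ε hε
      have : Function.update v s (v s + ε) s > u s := by
        simp [huv]
        exact hε
      exact (hmono _ u s this).le
    exact ge_of_tendsto hc hle
  have keyeq : ∀ u v : S → ℝ, u s = v s → Φ u s = Φ v s := fun u v h =>
    le_antisymm (key u v h) (key v u h.symm)
  refine ⟨fun t => Φ (fun _ => t) s, ?_, ?_⟩
  · intro a b hab
    exact hmono (fun _ => b) (fun _ => a) s hab
  · intro u
    exact keyeq u (fun _ => u s) rfl
end

section
/- Let S be a finite set with |S| ≥ 2 and suppose each φ_s : ℝ → ℝ is strictly increasing and continuous, with inverse φ_s⁻¹ defined on the open interval φ_s(ℝ). If for every nonempty finite X and U : X × S → ℝ one has NSD(X,S,Φ∘U) ⊆ NSD(X,S,U), where Φ(u)_s = φ_s(u_s), then each φ_s is convex. -/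
open Finset

def auxU {S : Type} (t : S) [DecidablePred (· = t)] (m' a b e c d : ℝ) : Fin 3 → S → ℝ :=
  fun i σ => if σ = t then ![m', a, b] i else ![e, e + c, e - d] i


def auxG (f : ℝ → ℝ) (x y l : ℝ) : ℝ :=
  f (l * x + (1 - l) * y) - (l * f x + (1 - l) * f y)

def auxX (r : ℝ) (n : ℕ) : ℝ := -1 + ∑ k ∈ Finset.range n, r ^ k

lemma auxG_le (f : ℝ → ℝ) (x y : ℝ) (hc : Continuous f)
    (hm : ∀ u v : ℝ, f ((u + v) / 2) ≤ (f u + f v) / 2) :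
    ∀ l ∈ Set.Icc (0:ℝ) 1, auxG f x y l ≤ 0 := by
  have gc : Continuous (auxG f x y) := by
    unfold auxG
    apply Continuous.sub
    · exact hc.comp (by continuity)
    · continuity
  have hgm : ∀ p q : ℝ, auxG f x y ((p + q) / 2) ≤ (auxG f x y p + auxG f x y q) / 2 := by
    intro p q
    have h1 := hm (p * x + (1 - p) * y) (q * x + (1 - q) * y)
    have e1 : (p * x + (1 - p) * y + (q * x + (1 - q) * y)) / 2
        = ((p + q) / 2) * x + (1 - (p + q) / 2) * y := by ring
    rw [e1] at h1
    unfold auxG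
    have e2 : ((p * f x + (1 - p) * f y) + (q * f x + (1 - q) * f y)) / 2
        = ((p + q) / 2) * f x + (1 - (p + q) / 2) * f y := by ring
    linarith
  have hg0 : auxG f x y 0 = 0 := by simp [auxG]
  have hg1 : auxG f x y 1 = 0 := by simp [auxG]
  obtain ⟨lm, hlm, hmax⟩ := isCompact_Icc.exists_isMaxOn
    (Set.nonempty_Icc.2 zero_le_one) gc.continuousOn
  by_cases hM : auxG f x y lm ≤ 0
  · intro l hl; exact le_trans (hmax hl) hM
  · exfalso
    push_neg at hM
    have hTc : IsClosed (Set.Icc (0:ℝ) 1 ∩ {l | auxG f x y l = auxG f x y lm}) :=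
      isClosed_Icc.inter (isClosed_eq gc continuous_const)
    have hTne : (Set.Icc (0:ℝ) 1 ∩ {l | auxG f x y l = auxG f x y lm}).Nonempty :=
      ⟨lm, hlm, rfl⟩
    have hTbdd : BddAbove (Set.Icc (0:ℝ) 1 ∩ {l | auxG f x y l = auxG f x y lm}) :=
      ⟨1, fun l hl => hl.1.2⟩
    obtain ⟨l0, hl0T, hl0ub⟩ :
        ∃ l0, l0 ∈ Set.Icc (0:ℝ) 1 ∩ {l | auxG f x y l = auxG f x y lm} ∧
          ∀ z ∈ Set.Icc (0:ℝ) 1 ∩ {l | auxG f x y l = auxG f x y lm}, z ≤ l0 :=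
      ⟨_, hTc.csSup_mem hTne hTbdd, fun z hz => le_csSup hTbdd hz⟩
    obtain ⟨⟨h0l, hl1⟩, hgl0⟩ := hl0T
    simp only [Set.mem_setOf_eq] at hgl0
    have hl0pos : 0 < l0 := by
      rcases h0l.lt_or_eq with h | h
      · exact h
      · exfalso; rw [← h, hg0] at hgl0; linarith
    have hl0lt : l0 < 1 := by
      rcases hl1.lt_or_eq with h | h
      · exact h
      · exfalso; rw [h, hg1] at hgl0; linarith
    obtain ⟨hh, hhpos, hle1, hle2⟩ :
        ∃ hh : ℝ, 0 < hh ∧ hh ≤ l0 ∧ hh ≤ 1 - l0 :=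
      ⟨min l0 (1 - l0), lt_min hl0pos (by linarith), min_le_left _ _, min_le_right _ _⟩
    have hmem1 : l0 - hh ∈ Set.Icc (0:ℝ) 1 := ⟨by linarith, by linarith⟩
    have hmem2 : l0 + hh ∈ Set.Icc (0:ℝ) 1 := ⟨by linarith, by linarith⟩
    have keym := hgm (l0 - hh) (l0 + hh)
    have e : (l0 - hh + (l0 + hh)) / 2 = l0 := by ring
    rw [e] at keym
    have h1 : auxG f x y (l0 - hh) ≤ auxG f x y lm := hmax hmem1
    have h2 : auxG f x y (l0 + hh) ≤ auxG f x y lm := hmax hmem2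
    have hEq : auxG f x y (l0 + hh) = auxG f x y lm := by linarith
    have : l0 + hh ≤ l0 := hl0ub _ ⟨hmem2, hEq⟩
    linarith

/-- Midpoint convex + continuous implies convex. -/
lemma midpoint_convexOn (f : ℝ → ℝ) (hc : Continuous f)
    (hm : ∀ x y : ℝ, f ((x + y) / 2) ≤ (f x + f y) / 2) :
    ConvexOn ℝ Set.univ f := by
  refine ⟨convex_univ, ?_⟩
  intro x _ y _ a b ha hb hab
  have hb' : b = 1 - a := by linarith
  have := auxG_le f x y hc hm a ⟨ha, by linarith⟩
  unfold auxG at this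
  rw [hb']
  simp only [smul_eq_mul]
  linarith

/-- Chain lemma. -/
lemma chain_lemma (ψ : ℝ → ℝ) (hψ : StrictMono ψ) (r K : ℝ)
    (hr0 : 0 < r) (hr1 : r < 1) (hK : 1 < K) :
    ∃ e d : ℝ, 0 < d ∧ ψ (e + r * d) - ψ e ≤ K * (ψ e - ψ (e - d)) := by
  by_contra hcon
  push_neg at hcon
  have hgap : ∀ n, auxX r (n + 1) = auxX r n + r ^ n := by
    intro n; simp only [auxX, Finset.sum_range_succ]; ring
  have hxlt : ∀ n, auxX r n < -1 + (1 - r)⁻¹ := by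
    intro n
    have hsum : ∑ k ∈ Finset.range n, r ^ k = (r ^ n - 1) / (r - 1) :=
      geom_sum_eq (by linarith) n
    have hpow : 0 < r ^ n := pow_pos hr0 n
    have hlt : (r ^ n - 1) / (r - 1) < (1 - r)⁻¹ := by
      rw [div_lt_iff_of_neg (by linarith : r - 1 < 0)]
      have he : (1 - r)⁻¹ * (r - 1) = -1 := by
        rw [inv_mul_eq_div, div_eq_iff (by linarith : (1:ℝ) - r ≠ 0)]; ring
      rw [he]; linarith
    simp only [auxX, hsum]; linarith
  have hxmono : Monotone (auxX r) := monotone_nat_of_le_succ (fun n => by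
    rw [hgap]; nlinarith [pow_pos hr0 n])
  have hx0 : auxX r 0 = -1 := by simp [auxX]
  have hDpos : ∀ n, 0 < ψ (auxX r (n + 1)) - ψ (auxX r n) := by
    intro n
    have : auxX r n < auxX r (n + 1) := by rw [hgap]; nlinarith [pow_pos hr0 n]
    exact sub_pos.2 (hψ this)
  have hstep : ∀ n, K * (ψ (auxX r (n + 1)) - ψ (auxX r n))
      < ψ (auxX r (n + 2)) - ψ (auxX r (n + 1)) := by
    intro n
    have hc := hcon (auxX r (n + 1)) (r ^ n) (pow_pos hr0 n)
    have e1 : auxX r (n + 1) + r * r ^ n = auxX r (n + 2) := by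
      rw [hgap (n + 1), pow_succ]; ring
    have e2 : auxX r (n + 1) - r ^ n = auxX r n := by rw [hgap n]; ring
    rw [e1, e2] at hc
    linarith
  have hDge : ∀ n, K ^ n * (ψ (auxX r 1) - ψ (auxX r 0))
      ≤ ψ (auxX r (n + 1)) - ψ (auxX r n) := by
    intro n
    induction n with
    | zero => simp
    | succ k ih =>
        have h1 : K * (K ^ k * (ψ (auxX r 1) - ψ (auxX r 0)))
            ≤ K * (ψ (auxX r (k + 1)) - ψ (auxX r k)) :=
          mul_le_mul_of_nonneg_left ih (by linarith)
        have h2 := hstep k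
        calc K ^ (k + 1) * (ψ (auxX r 1) - ψ (auxX r 0))
            = K * (K ^ k * (ψ (auxX r 1) - ψ (auxX r 0))) := by ring
          _ ≤ K * (ψ (auxX r (k + 1)) - ψ (auxX r k)) := h1
          _ ≤ ψ (auxX r (k + 2)) - ψ (auxX r (k + 1)) := h2.le
  have hbound : ∀ n, ψ (auxX r (n + 1)) - ψ (auxX r n)
      ≤ ψ (-1 + (1 - r)⁻¹) - ψ (-1) := by
    intro n
    have h1 : ψ (auxX r (n + 1)) ≤ ψ (-1 + (1 - r)⁻¹) := (hψ (hxlt (n + 1))).le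
    have h2 : ψ (-1) ≤ ψ (auxX r n) := by
      rw [← hx0]; exact hψ.monotone (hxmono (Nat.zero_le n))
    linarith
  obtain ⟨n, hn⟩ := pow_unbounded_of_one_lt
    ((ψ (-1 + (1 - r)⁻¹) - ψ (-1)) / (ψ (auxX r 1) - ψ (auxX r 0))) hK
  have hD0 : 0 < ψ (auxX r 1) - ψ (auxX r 0) := hDpos 0
  rw [div_lt_iff₀ hD0] at hn
  have h5 := hDge n
  have h6 := hbound n
  linarith

lemma claimB {S : Type} (φ : S → ℝ → ℝ) (t s : S) [DecidablePred (· = t)] (hst : s ≠ t)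
    (m' a b e c d : ℝ)
    (hAA' : φ t a < φ t m') (hA'B : φ t m' < φ t b)
    (hsd : φ s (e - d) < φ s e) (hsc : φ s e < φ s (e + c))
    (hkey : (φ t b - φ t m') * (φ s (e + c) - φ s e)
      ≤ (φ t m' - φ t a) * (φ s e - φ s (e - d))) :
    (0 : Fin 3) ∈ NSD Set.univ (fun i σ => φ σ (auxU t m' a b e c d i σ)) := by
  simp only [NSD, Set.mem_setOf_eq]
  rintro ⟨p, ⟨hp0, hp1⟩, hpdom⟩
  have ht := hpdom t (Set.mem_univ t)
  have hs := hpdom s (Set.mem_univ s)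
  rw [Fin.sum_univ_three] at ht hs hp1
  simp only [auxU, hst, eq_self_iff_true, ite_true, ite_false, Matrix.cons_val_zero,
    Matrix.cons_val_one, Matrix.head_cons, Matrix.cons_val_two, Matrix.tail_cons] at ht hs
  have hp00 := hp0 0
  have hp01 := hp0 1
  have hp02 := hp0 2
  have hp0eq : p 0 = 1 - p 1 - p 2 := by linarith
  rw [hp0eq] at ht hs
  clear hpdom hp0 hp1 hp0eq
  have hBA' : (0:ℝ) < φ t b - φ t m' := by linarith
  have hA'A : (0:ℝ) < φ t m' - φ t a := by linarith
  have hψ1 : 0 < φ s e - φ s (e - d) := by linarith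
  have hψ2 : 0 < φ s (e + c) - φ s e := by linarith
  have ht' : p 1 * (φ t m' - φ t a) < p 2 * (φ t b - φ t m') := by nlinarith [ht]
  have hs' : p 2 * (φ s e - φ s (e - d)) < p 1 * (φ s (e + c) - φ s e) := by
    nlinarith [hs]
  have hp2pos : 0 < p 2 := by nlinarith [ht', mul_nonneg hp01 hA'A.le]
  have hp1pos : 0 < p 1 := by nlinarith [hs', mul_pos hp2pos hψ1]
  have hm1 : (p 1 * (φ t m' - φ t a)) * (p 2 * (φ s e - φ s (e - d)))
      < (p 2 * (φ t b - φ t m')) * (p 1 * (φ s (e + c) - φ s e)) :=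
    mul_lt_mul'' ht' hs' (by positivity) (by positivity)
  nlinarith [hm1, mul_le_mul_of_nonneg_left hkey (mul_pos hp1pos hp2pos).le]

lemma claimA {S : Type} (φ : S → ℝ → ℝ) (t : S) [DecidablePred (· = t)]
    (m' a b e c d μ : ℝ)
    (hμ0 : 0 ≤ μ) (hμ1 : μ ≤ 1)
    (hta : μ * (b - a) < b - m') (hts : d < μ * (c + d)) :
    ∃ p : Fin 3 → ℝ, IsDist p ∧
      ∀ σ ∈ (Set.univ : Set S), (∑ y, auxU t m' a b e c d y σ * p y) > auxU t m' a b e c d 0 σ := by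
  refine ⟨![0, μ, 1 - μ], ⟨?_, ?_⟩, ?_⟩
  · intro i
    fin_cases i
    · show (0:ℝ) ≤ 0
      exact le_refl 0
    · show (0:ℝ) ≤ μ
      linarith
    · show (0:ℝ) ≤ 1 - μ
      linarith
  · rw [Fin.sum_univ_three]
    simp only [Matrix.cons_val_zero, Matrix.cons_val_one, Matrix.head_cons,
      Matrix.cons_val_two, Matrix.tail_cons]
    ring
  · intro σ _
    rw [Fin.sum_univ_three]
    by_cases hσ : σ = t
    · subst hσ
      simp only [auxU, eq_self_iff_true, ite_true, Matrix.cons_val_zero, Matrix.cons_val_one,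
        Matrix.head_cons, Matrix.cons_val_two, Matrix.tail_cons]
      nlinarith
    · simp only [auxU, hσ, ite_false, Matrix.cons_val_zero, Matrix.cons_val_one,
        Matrix.head_cons, Matrix.cons_val_two, Matrix.tail_cons]
      nlinarith

theorem stmt19 {S : Type} [Fintype S] (hS : 2 ≤ Fintype.card S)
    (φ : S → ℝ → ℝ)
    (hmono : ∀ s, StrictMono (φ s)) (hcont : ∀ s, Continuous (φ s))
    (h : ∀ (X : Type) [Fintype X] [Nonempty X] (U : X → S → ℝ),
          NSD (Set.univ : Set S) (fun x s => φ s (U x s)) ⊆ NSD Set.univ U) :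
    ∀ s, ConvexOn ℝ Set.univ (φ s) := by
  classical
  intro t
  by_contra hnc
  have hmid : ¬ ∀ x y : ℝ, φ t ((x + y) / 2) ≤ (φ t x + φ t y) / 2 :=
    fun hm => hnc (midpoint_convexOn _ (hcont t) hm)
  push_neg at hmid
  obtain ⟨x0, y0, hxy⟩ := hmid
  obtain ⟨a, b, hab, hviol⟩ :
      ∃ a b : ℝ, a < b ∧ φ t a + φ t b < 2 * φ t ((a + b) / 2) := by
    rcases lt_trichotomy x0 y0 with hlt | heq | hgt
    · exact ⟨x0, y0, hlt, by linarith⟩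
    · exfalso
      rw [heq] at hxy
      have : (y0 + y0) / 2 = y0 := by ring
      rw [this] at hxy; linarith
    · refine ⟨y0, x0, hgt, ?_⟩
      have : (y0 + x0) / 2 = (x0 + y0) / 2 := by ring
      rw [this]; linarith
  have ham : a < (a + b) / 2 := by linarith
  have hmb : (a + b) / 2 < b := by linarith
  have hopen : IsOpen {u : ℝ | φ t a + φ t b < 2 * φ t u} :=
    isOpen_lt continuous_const (continuous_const.mul (hcont t))
  obtain ⟨ε, hε, hball⟩ := Metric.isOpen_iff.1 hopen ((a + b) / 2) hviol
  obtain ⟨m', ham', hm'm, hviol'⟩ :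
      ∃ m', a < m' ∧ m' < (a + b) / 2 ∧ φ t a + φ t b < 2 * φ t m' := by
    refine ⟨max ((a + (a + b) / 2) / 2) ((a + b) / 2 - ε / 2),
      lt_max_of_lt_left (by linarith), max_lt (by linarith) (by linarith), ?_⟩
    apply hball
    rw [Metric.mem_ball, Real.dist_eq, abs_lt]
    constructor
    · have := le_max_right ((a + (a + b) / 2) / 2) ((a + b) / 2 - ε / 2)
      linarith
    · have h1 : max ((a + (a + b) / 2) / 2) ((a + b) / 2 - ε / 2) < (a + b) / 2 :=
        max_lt (by linarith) (by linarith)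
      linarith
  have hm'b : m' < b := by linarith
  have hAA' : φ t a < φ t m' := hmono t ham'
  have hA'B : φ t m' < φ t b := hmono t hm'b
  have hBA' : (0:ℝ) < φ t b - φ t m' := by linarith
  obtain ⟨K, hKdef⟩ : ∃ K : ℝ, K = (φ t m' - φ t a) / (φ t b - φ t m') := ⟨_, rfl⟩
  have hK : 1 < K := by
    rw [hKdef, lt_div_iff₀ hBA']; linarith
  obtain ⟨r, hrdef⟩ : ∃ r : ℝ, r = (m' - a) / (b - m') := ⟨_, rfl⟩
  have hbm' : (0:ℝ) < b - m' := by linarith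
  have hr0 : 0 < r := by rw [hrdef]; exact div_pos (by linarith) hbm'
  have hr1 : r < 1 := by rw [hrdef, div_lt_one hbm']; linarith
  obtain ⟨r', hr'def⟩ : ∃ r' : ℝ, r' = (r + 1) / 2 := ⟨_, rfl⟩
  have hr'0 : 0 < r' := by rw [hr'def]; linarith
  have hr'1 : r' < 1 := by rw [hr'def]; linarith
  have hrr' : r < r' := by rw [hr'def]; linarith
  obtain ⟨s, hst⟩ := Fintype.exists_ne_of_one_lt_card (by omega) t
  obtain ⟨e, d, hd, hchain⟩ := chain_lemma (φ s) (hmono s) r' K hr'0 hr'1 hK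
  obtain ⟨c, hcdef⟩ : ∃ c : ℝ, c = r' * d := ⟨_, rfl⟩
  have hc0 : 0 < c := by rw [hcdef]; exact mul_pos hr'0 hd
  have h1r : (0:ℝ) < 1 + r := by linarith
  have h1r' : (0:ℝ) < 1 + r' := by linarith
  obtain ⟨μ, hμdef⟩ : ∃ μ : ℝ, μ = (1 / (1 + r') + 1 / (1 + r)) / 2 := ⟨_, rfl⟩
  have hfrac : 1 / (1 + r') < 1 / (1 + r) :=
    one_div_lt_one_div_of_lt h1r (by linarith)
  have hμgt : 1 / (1 + r') < μ := by rw [hμdef]; linarith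
  have hμlt : μ < 1 / (1 + r) := by rw [hμdef]; linarith
  have hμ0 : 0 < μ := lt_trans (by positivity) hμgt
  have hμ1 : μ < 1 := by
    have : 1 / (1 + r) < 1 := by rw [div_lt_one h1r]; linarith
    linarith
  -- key inequality for claimB
  have hkey : (φ t b - φ t m') * (φ s (e + c) - φ s e)
      ≤ (φ t m' - φ t a) * (φ s e - φ s (e - d)) := by
    have h2 := hchain
    rw [← hcdef] at h2
    rw [hKdef, div_mul_eq_mul_div, le_div_iff₀ hBA'] at h2
    nlinarith [h2]
  have hsd : φ s (e - d) < φ s e := hmono s (by linarith)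
  have hsc : φ s e < φ s (e + c) := hmono s (by linarith)
  have hB := claimB φ t s hst m' a b e c d hAA' hA'B hsd hsc hkey
  -- μ inequalities for claimA
  have hta : μ * (b - a) < b - m' := by
    have h2 : μ * (1 + r) < 1 := (lt_div_iff₀ h1r).mp hμlt
    have h3 : r * (b - m') = m' - a := by
      rw [hrdef]; field_simp
    have h4 : μ * (r * (b - m')) = μ * (m' - a) := by rw [h3]
    have h5 := mul_lt_mul_of_pos_right h2 hbm'
    linarith [h5, h4]
  have hts : d < μ * (c + d) := by
    have h2 : 1 < μ * (1 + r') := (div_lt_iff₀ h1r').mp hμgt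
    have h4 : μ * ((1 + r') * d) = μ * (c + d) := by rw [hcdef]; ring
    have h5 := mul_lt_mul_of_pos_right h2 hd
    linarith [h5, h4]
  have hA := claimA φ t m' a b e c d μ hμ0.le hμ1.le hta hts
  have hAmem := h (Fin 3) (auxU t m' a b e c d) hB
  simp only [NSD, Set.mem_setOf_eq] at hAmem
  exact hAmem hA
end
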